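/- arXiv:2101.11677 — 9 statements merged into one kernel-verified Lean document; each statement's English description precedes it below -/
import Mathlib

section
/- Let V be a finite-dimensional complex vector space with a nondegenerate bilinear form B that is either symmetric or skew-symmetric, and let T be a linear endomorphism of V with rank 1 such that the image of T equals the image of its adjoint T*. Then T is self-adjoint or skew-adjoint (i.e., T* = T or T* = -T). -/
/-- Let `V` be a finite-dimensional complex vector space with a nondegenerate
bilinear form `B` that is either symmetric or skew-symmetric, and let `T` be a linear
endomorphism of `V` with rank 1 such that the image of `T` equals the image of its adjoint
`Tadj`. Then `T` is self-adjoint or skew-adjoint. -/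
theorem stmt0 {V : Type*} [AddCommGroup V] [Module ℂ V] [FiniteDimensional ℂ V]
    (B : V →ₗ[ℂ] V →ₗ[ℂ] ℂ)
    (hB : ∀ u : V, (∀ v : V, B u v = 0) → u = 0)
    (hsym : (∀ u v : V, B u v = B v u) ∨ (∀ u v : V, B u v = - B v u))
    (T Tadj : V →ₗ[ℂ] V)
    (hadj : ∀ u v : V, B (T u) v = B u (Tadj v))
    (hrank : Module.finrank ℂ (LinearMap.range T) = 1)
    (him : LinearMap.range T = LinearMap.range Tadj) :
    Tadj = T ∨ Tadj = -T := by
  -- get a spanning vector w of the range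
  have hbot : LinearMap.range T ≠ ⊥ := by
    intro h
    rw [h] at hrank
    simp at hrank
  obtain ⟨w, hwmem, hw0⟩ := Submodule.exists_mem_ne_zero_of_ne_bot hbot
  have hspan : LinearMap.range T = Submodule.span ℂ {w} := by
    symm
    apply Submodule.eq_of_le_of_finrank_le
    · exact (Submodule.span_singleton_le_iff_mem _ _).mpr hwmem
    · rw [hrank, finrank_span_singleton hw0]
  have hc : ∀ u : V, ∃ a : ℂ, T u = a • w := by
    intro u
    have h := LinearMap.mem_range_self T u
    rw [hspan, Submodule.mem_span_singleton] at h
    obtain ⟨a, ha⟩ := h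
    exact ⟨a, ha.symm⟩
  have hd : ∀ v : V, ∃ a : ℂ, Tadj v = a • w := by
    intro v
    have h := LinearMap.mem_range_self Tadj v
    rw [← him, hspan, Submodule.mem_span_singleton] at h
    obtain ⟨a, ha⟩ := h
    exact ⟨a, ha.symm⟩
  choose c hcc using hc
  choose d hdd using hd
  have key : ∀ u v : V, c u * B w v = d v * B u w := by
    intro u v
    have h := hadj u v
    rw [hcc u, hdd v] at h
    simpa [smul_eq_mul, mul_comm] using h
  -- find v₀ with B w v₀ ≠ 0
  have hex : ∃ v₀ : V, B w v₀ ≠ 0 := by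
    by_contra h
    push_neg at h
    exact hw0 (hB w h)
  obtain ⟨v₀, hv₀⟩ := hex
  have hv₀w : B v₀ w ≠ 0 := by
    rcases hsym with hs | hs
    · rw [← hs]; exact hv₀
    · intro h; apply hv₀; rw [hs]; simp [h]
  have hne : B v₀ w * B w v₀ ≠ 0 := mul_ne_zero hv₀w hv₀
  rcases hsym with hs | hs
  · left
    ext v
    rw [hdd v, hcc v]
    congr 1
    have h1 := key v v₀
    have h2 := key v₀ v
    have h3 := key v₀ v₀
    have hsv := hs w v
    apply mul_right_cancel₀ hne
    linear_combination (-(B w v₀)) * h2 + (B w v) * h3 + (d v₀ * B v₀ w) * hsv - (B v₀ w) * h1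
  · right
    ext v
    rw [LinearMap.neg_apply, hdd v, hcc v, ← neg_smul]
    congr 1
    have h1 := key v v₀
    have h2 := key v₀ v
    have h3 := key v₀ v₀
    have hsv := hs w v
    apply mul_right_cancel₀ hne
    linear_combination (-(B w v₀)) * h2 + (B w v) * h3 + (d v₀ * B v₀ w) * hsv + (B v₀ w) * h1
end

section
/- Let B be a nondegenerate skew-symmetric (symplectic) bilinear form on V = \u2102^{2n}, and let X be a nonzero nilpotent self-adjoint endomorphism of V (i.e., B(Xu,v) = B(u,Xv) for all u,v). Then in the Jordan type of X, every Jordan block size occurs with even multiplicity. -/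
/-!
Since `X` is `B`-self-adjoint, each form `(u, v) ↦ B (X ^ k u) v` is again skew-symmetric, and
since `B` is nondegenerate its rank is `rank (X ^ k)`. A skew-symmetric form has even rank: it
is nondegenerate on a complement of its kernel, and a nonsingular skew-symmetric `d × d` matrix
satisfies `det S = det Sᵀ = (-1) ^ d det S`, so `d` is even. Thus every `rank (X ^ k)` is even.
-/

open Module LinearMap

namespace LinearMap

variable {K M N : Type*} [Field K] [AddCommGroup M] [Module K M] [AddCommGroup N] [Module K N]

lemma finrank_range_comp_of_injective {P : Type*} [AddCommGroup P] [Module K P]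
    {g : N →ₗ[K] P} (hg : Function.Injective g) (f : M →ₗ[K] N) :
    finrank K (range (g ∘ₗ f)) = finrank K (range f) := by
  rw [range_comp]
  exact (Submodule.equivMapOfInjective g hg _).finrank_eq.symm

lemma IsSelfAdjoint.pow {B : M →ₗ[K] M →ₗ[K] N} {f : Module.End K M} (hf : B.IsSelfAdjoint f)
    (k : ℕ) : B.IsSelfAdjoint ⇑(f ^ k) := by
  induction k with
  | zero => exact isAdjointPair_one
  | succ k ih =>
    have := ih.mul hf
    rwa [← pow_succ, ← pow_succ'] at this

namespace BilinForm

variable [FiniteDimensional K M]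

open Matrix in
theorem even_finrank_of_separatingLeft_of_skew (h2 : (2 : K) ≠ 0) {B : LinearMap.BilinForm K M}
    (hB : B.SeparatingLeft) (hskew : ∀ u v, B u v = -B v u) : Even (finrank K M) := by
  set S := toMatrix (finBasis K M) B
  have hdet : S.det ≠ 0 :=
    Matrix.separatingLeft_iff_det_ne_zero.mp ((separatingLeft_toMatrix_iff _).mpr hB)
  have hS : Sᵀ = -S := by
    ext i j
    exact hskew _ _
  have hsign : (-1 : K) ^ finrank K M = 1 := by
    have := congrArg Matrix.det hS
    rw [Matrix.det_transpose, Matrix.det_neg, Fintype.card_fin] at this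
    exact (mul_eq_right₀ hdet).mp this.symm
  exact (neg_one_pow_eq_one_iff_even fun h => h2 (by linear_combination -h)).mp hsign

theorem even_finrank_range_of_skew (h2 : (2 : K) ≠ 0) {B : LinearMap.BilinForm K M}
    (hskew : ∀ u v, B u v = -B v u) : Even (finrank K (range B)) := by
  obtain ⟨U, hU⟩ := (ker B).exists_isCompl
  have hUB : ∀ x ∈ U, ∀ y ∈ ker B, B x y = 0 := fun x _ y hy => by
    rw [hskew, mem_ker.mp hy, LinearMap.zero_apply, neg_zero]
  have hsep : (B.restrict U).SeparatingLeft := by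
    rw [separatingLeft_iff_ker_eq_bot, ker_restrict_eq_of_codisjoint hU.symm.codisjoint hUB,
      ← Submodule.disjoint_iff_comap_eq_bot]
    exact hU.symm.disjoint
  have hrange : finrank K (range B) = finrank K U := by
    have := finrank_range_add_finrank_ker B
    have := Submodule.finrank_add_eq_of_isCompl hU
    omega
  rw [hrange]
  exact even_finrank_of_separatingLeft_of_skew h2 hsep fun u v => hskew u v

end BilinForm

end LinearMap

theorem stmt1_general (n : ℕ)
    (B : (Fin (2*n) → ℂ) →ₗ[ℂ] (Fin (2*n) → ℂ) →ₗ[ℂ] ℂ)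
    (hskew : ∀ u v, B u v = - B v u)
    (hB : ∀ u, (∀ v, B u v = 0) → u = 0)
    (X : Module.End ℂ (Fin (2*n) → ℂ))
    (hsa : ∀ u v, B (X u) v = B u (X v)) :
    ∀ r : ℕ, Even (Module.finrank ℂ (LinearMap.range (X ^ r)) +
        Module.finrank ℂ (LinearMap.range (X ^ (r + 2)))) := by
  have hBinj : Function.Injective B :=
    (injective_iff_map_eq_zero B).mpr fun u hu => hB u fun v => by rw [hu, LinearMap.zero_apply]
  have hrank (k : ℕ) : Even (finrank ℂ (range (X ^ k))) := by
    rw [← finrank_range_comp_of_injective hBinj]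
    refine BilinForm.even_finrank_range_of_skew two_ne_zero fun u v => ?_
    simp only [comp_apply]
    rw [LinearMap.IsSelfAdjoint.pow hsa k u v, hskew]
  exact fun r => (hrank r).add (hrank (r + 2))

/-- For a nondegenerate skew-symmetric (symplectic) bilinear form `B` on
`ℂ^{2n}` and a nonzero nilpotent self-adjoint endomorphism `X`, every Jordan block size
occurs with even multiplicity.  The multiplicity of Jordan blocks of size `r+1` equals
`rank X^r - 2 rank X^{r+1} + rank X^{r+2}`, so this is even for all `r` if and only if
`rank X^r + rank X^{r+2}` is even for all `r`. -/
theorem stmt1 (n : ℕ)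
    (B : (Fin (2*n) → ℂ) →ₗ[ℂ] (Fin (2*n) → ℂ) →ₗ[ℂ] ℂ)
    (hskew : ∀ u v, B u v = - B v u)
    (hB : ∀ u, (∀ v, B u v = 0) → u = 0)
    (X : Module.End ℂ (Fin (2*n) → ℂ))
    (hX : X ≠ 0) (hnil : IsNilpotent X)
    (hsa : ∀ u v, B (X u) v = B u (X v)) :
    ∀ r : ℕ, Even (Module.finrank ℂ (LinearMap.range (X ^ r)) +
        Module.finrank ℂ (LinearMap.range (X ^ (r + 2)))) :=
  stmt1_general n B hskew hB X hsa
end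

section
/- Let B be a nondegenerate symmetric or skew-symmetric bilinear form on a complex vector space V, let X be a nonzero nilpotent self-adjoint endomorphism of V extended to an sl2-triple (H, X, Y) with Y self-adjoint and H anti-self-adjoint, and let H(r) denote the highest weight space of weight r in the induced sl2-representation on V. Then the bilinear form (u,v)_r := B(u, Y^r v) on H(r) is nondegenerate, and it is symmetric if B is symmetric and skew-symmetric if B is skew-symmetric. -/
open Module

section Aux
variable {V : Type*} [AddCommGroup V] [Module ℂ V]

private lemma swap_pow {A W A' : Module.End ℂ V} (h : A * W = W * A') :
    ∀ k : ℕ, A ^ k * W = W * A' ^ k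
  | 0 => by simp
  | (k + 1) => by
      rw [pow_succ, pow_succ, mul_assoc, h, ← mul_assoc, swap_pow h k, mul_assoc]

private lemma add_pow_apply_zero {C D : Module.End ℂ V} (h : Commute C D) {v : V} {a b : ℕ}
    (hC : (C ^ a) v = 0) (hD : (D ^ b) v = 0) : ((C + D) ^ (a + b)) v = 0 := by
  rw [h.add_pow, LinearMap.sum_apply]
  apply Finset.sum_eq_zero
  intro m _
  rcases le_or_gt a m with hma | hma
  · have h1 : C ^ m * D ^ (a + b - m) * ((a+b).choose m : Module.End ℂ V)
        = ((a+b).choose m : Module.End ℂ V) * (D ^ (a + b - m) * (C ^ (m - a) * C ^ a)) :=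
      calc C ^ m * D ^ (a + b - m) * ((a+b).choose m : Module.End ℂ V)
          = ((a+b).choose m : Module.End ℂ V) * (C ^ m * D ^ (a + b - m)) :=
            (Nat.commute_cast _ _).eq
        _ = ((a+b).choose m : Module.End ℂ V) * (D ^ (a + b - m) * C ^ m) := by
            rw [(h.pow_pow m _).eq]
        _ = ((a+b).choose m : Module.End ℂ V) * (D ^ (a + b - m) * (C ^ (m - a) * C ^ a)) := by
            rw [← pow_add, Nat.sub_add_cancel hma]
    rw [h1, Module.End.mul_apply, Module.End.mul_apply, Module.End.mul_apply, hC, map_zero,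
      map_zero, map_zero]
  · have hb : b ≤ a + b - m := by omega
    have h1 : C ^ m * D ^ (a + b - m) * ((a+b).choose m : Module.End ℂ V)
        = C ^ m * (((a+b).choose m : Module.End ℂ V) * (D ^ (a + b - m - b) * D ^ b)) := by
      rw [mul_assoc, (Nat.commute_cast (D ^ (a+b-m)) ((a+b).choose m)).eq,
        ← pow_add, Nat.sub_add_cancel hb]
    rw [h1, Module.End.mul_apply, Module.End.mul_apply, Module.End.mul_apply, hD, map_zero,
      map_zero, map_zero]

end Aux

section Aux2
variable {V : Type*} [AddCommGroup V] [Module ℂ V]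

private lemma two_End : (2 : Module.End ℂ V) = (2:ℂ) • 1 := by
  rw [two_smul]; exact one_add_one_eq_two.symm

private lemma map_mem {A B W : Module.End ℂ V} (hAB : A * B = B * A)
    (hA : A * W = W * (A + A - B - 2)) (hB : B * W = W * A) {a b : ℂ} {v : V}
    (hva : v ∈ A.maxGenEigenspace a) (hvb : v ∈ B.maxGenEigenspace b) :
    W v ∈ A.maxGenEigenspace (2*a - b - 2) ∧ W v ∈ B.maxGenEigenspace a := by
  rw [Module.End.mem_maxGenEigenspace] at hva hvb
  obtain ⟨ka, hka⟩ := hva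
  obtain ⟨kb, hkb⟩ := hvb
  constructor
  · rw [Module.End.mem_maxGenEigenspace]
    refine ⟨ka + kb, ?_⟩
    have hCD : Commute (A - a • 1) (B - b • 1) := by
      have h1 : Commute A B := hAB
      exact (h1.sub_right ((Commute.one_right A).smul_right b)).sub_left
        (((Commute.one_left _).smul_left a))
    have key : (A - (2*a - b - 2) • 1) * W
        = W * (((A - a • 1) + (A - a • 1)) + -(B - b • 1)) := by
      rw [sub_mul, hA, smul_mul_assoc, one_mul]
      rw [show (2*a - b - 2) • W = W * ((2*a - b - 2) • (1 : Module.End ℂ V)) by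
        rw [mul_smul_comm, mul_one]]
      rw [← mul_sub]
      congr 1
      rw [two_End]
      module
    have hCC : (((A - a • 1) + (A - a • 1)) ^ ka) v = 0 := by
      rw [← two_smul ℂ (A - a • 1), smul_pow, LinearMap.smul_apply, hka, smul_zero]
    have hDD : ((-(B - b • 1)) ^ kb) v = 0 := by
      rw [neg_pow, Module.End.mul_apply, hkb, map_zero]
    have hsum := add_pow_apply_zero ((hCD.add_left hCD).neg_right) hCC hDD
    rw [← Module.End.mul_apply, swap_pow key (ka + kb), Module.End.mul_apply, hsum, map_zero]
  · rw [Module.End.mem_maxGenEigenspace]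
    refine ⟨ka, ?_⟩
    have hswap : (B - a • 1) * W = W * (A - a • 1) := by
      rw [sub_mul, mul_sub, hB, smul_mul_assoc, one_mul, mul_smul_comm, mul_one]
    rw [← Module.End.mul_apply, swap_pow hswap ka, Module.End.mul_apply, hka, map_zero]

end Aux2

section Aux3
variable {V : Type*} [AddCommGroup V] [Module ℂ V]

private lemma chain_mem {A B W : Module.End ℂ V} (hAB : A * B = B * A)
    (hA : A * W = W * (A + A - B - 2)) (hB : B * W = W * A) {p : ℂ} {w : V}
    (hwp : w ∈ A.maxGenEigenspace p) (hwq : w ∈ B.maxGenEigenspace 0) :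
    ∀ i : ℕ, (W ^ i) w ∈ A.maxGenEigenspace (((i:ℂ)+1)*(p - (i:ℂ)))
      ∧ (W ^ i) w ∈ B.maxGenEigenspace ((i:ℂ)*(p - (i:ℂ) + 1)) := by
  intro i
  induction i with
  | zero => exact ⟨by simpa using hwp, by simpa using hwq⟩
  | succ i ih =>
      have hmm := map_mem hAB hA hB ih.1 ih.2
      have hx : (W ^ (i+1)) w = W ((W ^ i) w) := by rw [pow_succ', Module.End.mul_apply]
      constructor
      · rw [hx, show (((i+1:ℕ):ℂ)+1)*(p - ((i+1:ℕ):ℂ))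
            = 2*(((i:ℂ)+1)*(p - (i:ℂ))) - ((i:ℂ)*(p - (i:ℂ) + 1)) - 2 by push_cast; ring]
        exact hmm.1
      · rw [hx, show (((i+1:ℕ):ℂ))*(p - ((i+1:ℕ):ℂ) + 1) = ((i:ℂ)+1)*(p - (i:ℂ)) by
          push_cast; ring]
        exact hmm.2

private lemma chain_nat [FiniteDimensional ℂ V] {A B W : Module.End ℂ V} (hAB : A * B = B * A)
    (hA : A * W = W * (A + A - B - 2)) (hB : B * W = W * A)
    (hker : ∀ v : V, W v = 0 → A v = 0) {p : ℂ} {w : V} (hw : w ≠ 0)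
    (hwp : w ∈ A.maxGenEigenspace p) (hwq : w ∈ B.maxGenEigenspace 0) :
    ∃ i : ℕ, p = (i : ℂ) := by
  classical
  have hmem := chain_mem hAB hA hB hwp hwq
  by_cases hterm : ∃ m : ℕ, (W ^ m) w = 0
  · have hm0 := Nat.find_spec hterm
    have hmpos : Nat.find hterm ≠ 0 := by
      intro h
      rw [h, pow_zero, Module.End.one_apply] at hm0
      exact hw hm0
    obtain ⟨i, hi⟩ : ∃ i, Nat.find hterm = i + 1 := ⟨Nat.find hterm - 1, by omega⟩
    have hlt : (W ^ i) w ≠ 0 := Nat.find_min hterm (by omega)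
    rw [hi] at hm0
    have hv0 : A ((W ^ i) w) = 0 := by
      apply hker
      rw [← Module.End.mul_apply, ← pow_succ']
      exact hm0
    have h0mem : (W ^ i) w ∈ A.maxGenEigenspace 0 := by
      rw [Module.End.mem_maxGenEigenspace]
      exact ⟨1, by simpa using hv0⟩
    by_cases hzero : ((i:ℂ)+1)*(p - (i:ℂ)) = 0
    · have h2 := (mul_eq_zero.mp hzero).resolve_left (by
        exact_mod_cast Nat.cast_add_one_ne_zero (R := ℂ) i)
      exact ⟨i, sub_eq_zero.mp h2⟩
    · exfalso
      have hdis := Module.End.disjoint_genEigenspace A hzero (⊤ : ℕ∞) (⊤ : ℕ∞)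
      exact hlt (Submodule.disjoint_def.mp hdis _ (hmem i).1 h0mem)
  · push_neg at hterm
    have hE : {μ : ℂ | A.maxGenEigenspace μ ≠ ⊥}.Finite :=
      WellFoundedGT.finite_ne_bot_of_iSupIndep A.independent_maxGenEigenspace
    have htE : ∀ i : ℕ, ((i:ℂ)+1)*(p - (i:ℂ)) ∈ hE.toFinset := by
      intro i
      rw [Set.Finite.mem_toFinset, Set.mem_setOf_eq, Submodule.ne_bot_iff]
      exact ⟨_, (hmem i).1, hterm i⟩
    obtain ⟨x, hx, y, hy, hxy, heq⟩ :=
      Finset.exists_ne_map_eq_of_card_lt_of_maps_to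
        (s := Finset.range (hE.toFinset.card + 1)) (by simp) (fun i _ => htE i)
    have hC : ((x:ℂ) - (y:ℂ)) * (p - ((x:ℂ) + (y:ℂ) + 1)) = 0 := by linear_combination heq
    have hne : ((x:ℂ) - (y:ℂ)) ≠ 0 := sub_ne_zero.mpr (by exact_mod_cast hxy)
    have h2 := (mul_eq_zero.mp hC).resolve_left hne
    refine ⟨x + y + 1, ?_⟩
    push_cast
    linear_combination h2

end Aux3

section Aux4
variable {V : Type*} [AddCommGroup V] [Module ℂ V] {X Y H : Module.End ℂ V}

private lemma e1i (hXY : X * Y - Y * X = H) : X * Y = Y * X + H := by rw [← hXY]; abel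
private lemma e1i' (hXY : X * Y - Y * X = H) : Y * X = X * Y - H := by rw [← hXY]; abel

private lemma e2i (hHX : H * X - X * H = 2 • X) : X * H = H * X - (X + X) := by
  calc X * H = H * X - (H * X - X * H) := by abel
    _ = H * X - 2 • X := by rw [hHX]
    _ = H * X - (X + X) := by rw [two_nsmul]

private lemma e2i' (hHX : H * X - X * H = 2 • X) : H * X = X * H + (X + X) := by
  rw [e2i hHX]; abel

private lemma e3i (hHY : H * Y - Y * H = -(2 • Y)) : Y * H = H * Y + (Y + Y) := by
  calc Y * H = H * Y - (H * Y - Y * H) := by abel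
    _ = H * Y - -(2 • Y) := by rw [hHY]
    _ = H * Y + (Y + Y) := by rw [two_nsmul]; abel

private lemma e3i' (hHY : H * Y - Y * H = -(2 • Y)) : H * Y = Y * H - (Y + Y) := by
  rw [e3i hHY]; abel

private lemma iPH (hHX : H * X - X * H = 2 • X) (hHY : H * Y - Y * H = -(2 • Y)) :
    (Y * X) * H = H * (Y * X) := by
  calc (Y*X)*H = Y*(X*H) := mul_assoc _ _ _
    _ = Y*(H*X) - (Y*X + Y*X) := by rw [e2i hHX, mul_sub, mul_add]
    _ = (Y*H)*X - (Y*X + Y*X) := by rw [mul_assoc]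
    _ = (H*Y)*X + (Y*X + Y*X) - (Y*X + Y*X) := by rw [e3i hHY, add_mul, add_mul]
    _ = H*(Y*X) := by rw [mul_assoc]; abel

private lemma iPQ (hHX : H * X - X * H = 2 • X) (hHY : H * Y - Y * H = -(2 • Y))
    (hXY : X * Y - Y * X = H) : (Y * X) * (X * Y) = (X * Y) * (Y * X) := by
  conv_lhs => rw [e1i hXY]
  conv_rhs => rw [e1i hXY]
  rw [mul_add, add_mul, iPH hHX hHY]

private lemma iPX (hHX : H * X - X * H = 2 • X) (hXY : X * Y - Y * X = H) :
    (Y * X) * X = X * ((Y * X) + (Y * X) - (X * Y) - 2) := by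
  have hXQ : X * (X * Y) = X * (Y * X) + (H * X - (X + X)) := by
    conv_lhs => rw [e1i hXY]
    rw [mul_add, e2i hHX]
  have lhs : (Y * X) * X = X * (Y * X) - H * X := by
    conv_lhs => rw [e1i' hXY]
    rw [sub_mul, mul_assoc]
  have rhs : X * ((Y * X) + (Y * X) - (X * Y) - 2) = X * (Y * X) - H * X := by
    rw [mul_sub, mul_sub, mul_add, hXQ, mul_two]
    abel
  rw [lhs, rhs]

private lemma iQY (hHY : H * Y - Y * H = -(2 • Y)) (hXY : X * Y - Y * X = H) :
    (X * Y) * Y = Y * ((X * Y) + (X * Y) - (Y * X) - 2) := by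
  have hYH : Y * (X * Y) - Y * (Y * X) = Y * H := by rw [← mul_sub, hXY]
  have lhs : (X * Y) * Y = Y * (X * Y) + (Y * H - (Y + Y)) := by
    conv_lhs => rw [e1i hXY]
    rw [add_mul, mul_assoc, e3i' hHY]
  have rhs : Y * ((X * Y) + (X * Y) - (Y * X) - 2) = Y * (X * Y) + (Y * H - (Y + Y)) := by
    rw [mul_sub, mul_sub, mul_add, mul_two, ← hYH]
    abel
  rw [lhs, rhs]

private lemma iHXpow (hHX : H * X - X * H = 2 • X) :
    ∀ m : ℕ, H * X ^ m = X ^ m * H + (2 * (m:ℂ)) • X ^ m := by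
  intro m
  induction m with
  | zero => simp
  | succ m ih =>
    rw [pow_succ, ← mul_assoc, ih, add_mul, smul_mul_assoc, mul_assoc, e2i' hHX,
      mul_add, mul_add, ← mul_assoc, ← pow_succ]
    push_cast
    module

private lemma iYXpow (hHX : H * X - X * H = 2 • X) (hXY : X * Y - Y * X = H) :
    ∀ m : ℕ, Y * X ^ (m+1)
      = X ^ (m+1) * Y - ((m:ℂ)+1) • (X ^ m * H) - (((m:ℂ)+1)*(m:ℂ)) • X ^ m := by
  intro m
  induction m with
  | zero => simpa using e1i' hXY
  | succ m ih =>
    rw [pow_succ (n := m + 1), ← mul_assoc, ih, sub_mul, sub_mul, smul_mul_assoc,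
      smul_mul_assoc, mul_assoc (X ^ (m+1)), e1i' hXY, mul_assoc (X ^ m), e2i' hHX,
      ← pow_succ]
    rw [mul_sub, mul_add, mul_add, ← mul_assoc (X^(m+1)), ← pow_succ,
      ← mul_assoc (X^m), ← pow_succ]
    push_cast
    module

end Aux4

private def an (n k : ℕ) : ℕ := ∏ j ∈ Finset.range k, ((j+1)*(n-j))

private def bn (n : ℕ) : ℕ → ℕ
  | 0 => 0
  | (k+1) => (k+1)*(n-k)*(bn n k) + (k+1)*(an n k)

private lemma an_succ (n k : ℕ) : an n (k+1) = ((k+1)*(n-k)) * an n k := by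
  rw [an, an, Finset.prod_range_succ]; ring

private lemma an_ne_zero (n : ℕ) : an n n ≠ 0 := by
  rw [an, Finset.prod_ne_zero_iff]
  intro j hj
  rw [Finset.mem_range] at hj
  exact Nat.mul_ne_zero (by omega) (by omega)

private theorem bkey {V : Type*} [AddCommGroup V] [Module ℂ V] [FiniteDimensional ℂ V]
    (B : V →ₗ[ℂ] V →ₗ[ℂ] ℂ)
    (X Y H : Module.End ℂ V)
    (hXsa : ∀ u v, B (X u) v = B u (X v))
    (hHa : ∀ u v, B (H u) v = - B u (H v))
    (hHX : H * X - X * H = 2 • X)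
    (hHY : H * Y - Y * H = -(2 • Y))
    (hXY : X * Y - Y * X = H)
    (r : ℕ) (u : V) (hu1 : H u = (r:ℂ) • u) (hu2 : X u = 0)
    (hyp : ∀ v : V, H v = (r:ℂ) • v → X v = 0 → B u ((Y ^ r) v) = 0) :
    ∀ w : V, B u w = 0 := by
  have hiPQ := iPQ hHX hHY hXY
  have hiPX := iPX hHX hXY
  have hiQY := iQY hHY hXY
  have hiQXm : (X*Y) * X = X * (Y*X) := mul_assoc X Y X
  have hiPYm : (Y*X) * Y = Y * (X*Y) := mul_assoc Y X Y
  have hkerX : ∀ v : V, X v = 0 → (Y*X) v = 0 := by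
    intro v hv; rw [Module.End.mul_apply, hv, map_zero]
  have hkerY : ∀ v : V, Y v = 0 → (X*Y) v = 0 := by
    intro v hv; rw [Module.End.mul_apply, hv, map_zero]
  have natX : ∀ {p : ℂ} {w : V}, w ≠ 0 → w ∈ (Y*X).maxGenEigenspace p →
      w ∈ (X*Y).maxGenEigenspace 0 → ∃ i : ℕ, p = (i:ℂ) :=
    fun hw hwp hwq => chain_nat hiPQ hiPX hiQXm hkerX hw hwp hwq
  have natY : ∀ {q : ℂ} {z : V}, z ≠ 0 → z ∈ (X*Y).maxGenEigenspace q →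
      z ∈ (Y*X).maxGenEigenspace 0 → ∃ j : ℕ, q = (j:ℂ) :=
    fun hz hzq hzp => chain_nat hiPQ.symm hiQY hiPYm hkerY hz hzq hzp
  -- B-side basic lemmas
  have bX : ∀ v : V, B u (X v) = 0 := by
    intro v; rw [← hXsa, hu2, LinearMap.map_zero₂]
  have bH : ∀ v : V, B u (H v) = -((r:ℂ) * B u v) := by
    intro v
    have h := hHa u v
    rw [hu1, LinearMap.map_smul₂, smul_eq_mul] at h
    linear_combination h
  have L2gen : ∀ (μ : ℂ), μ ≠ -(r:ℂ) → ∀ (k : ℕ) (w : V), ((H - μ•1)^k) w = 0 → B u w = 0 := by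
    intro μ hμ k
    induction k with
    | zero =>
        intro w hw
        rw [pow_zero, Module.End.one_apply] at hw
        rw [hw, map_zero]
    | succ k ih =>
        intro w hw
        have hw' : ((H - μ•1)^k) ((H - μ•1) w) = 0 := by
          rw [← Module.End.mul_apply, ← pow_succ]; exact hw
        have h0 := ih _ hw'
        rw [LinearMap.sub_apply, LinearMap.smul_apply, Module.End.one_apply, map_sub,
          map_smul, bH w, smul_eq_mul] at h0
        have hfac : -((r:ℂ) + μ) * (B u w) = 0 := by linear_combination h0
        have hne : ((r:ℂ) + μ) ≠ 0 := fun hc => hμ (by linear_combination hc)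
        exact (mul_eq_zero.mp hfac).resolve_left (neg_ne_zero.mpr hne)
  have bQgen : ∀ (μ : ℂ), μ ≠ 0 → ∀ (k : ℕ) (w : V), (((X*Y) - μ•1)^k) w = 0 → B u w = 0 := by
    intro μ hμ k
    induction k with
    | zero =>
        intro w hw
        rw [pow_zero, Module.End.one_apply] at hw
        rw [hw, map_zero]
    | succ k ih =>
        intro w hw
        have hw' : (((X*Y) - μ•1)^k) (((X*Y) - μ•1) w) = 0 := by
          rw [← Module.End.mul_apply, ← pow_succ]; exact hw
        have h0 := ih _ hw'
        rw [LinearMap.sub_apply, LinearMap.smul_apply, Module.End.one_apply, map_sub,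
          map_smul, Module.End.mul_apply, bX, smul_eq_mul] at h0
        have hfac : -μ * (B u w) = 0 := by linear_combination h0
        exact (mul_eq_zero.mp hfac).resolve_left (neg_ne_zero.mpr hμ)
  have kerY_P : ∀ z : V, Y z = 0 → Y ((Y*X) z) = 0 := by
    intro z hz
    rw [e1i' hXY, LinearMap.sub_apply, map_sub, Module.End.mul_apply, hz, map_zero, map_zero,
      zero_sub, neg_eq_zero, ← Module.End.mul_apply, e3i hHY]
    simp [Module.End.mul_apply, LinearMap.add_apply, hz]
  have Yapp : ∀ (k : ℕ) (z : V), Y z = 0 →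
      Y ((X^(k+1)) z) = -(((k:ℂ)+1) • ((X^k) (H z))) - (((k:ℂ)+1)*(k:ℂ)) • ((X^k) z) := by
    intro k z hz
    have h := congrArg (fun f : Module.End ℂ V => f z) (iYXpow hHX hXY k)
    simp only [Module.End.mul_apply, LinearMap.sub_apply, LinearMap.smul_apply] at h
    rw [hz, map_zero, zero_sub] at h
    exact h
  have bs1 : ∀ (n : ℕ) (z : V), Y z = 0 → H z = -(n:ℂ)•z → ∀ k, k ≤ n+1 →
      (Y^k) ((X^k) z) = ((an n k : ℕ) : ℂ) • z := by
    intro n z hz hH k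
    induction k with
    | zero => intro _; simp [an]
    | succ k ih =>
        intro hk
        have hk' : k ≤ n := by omega
        have h1 := Yapp k z hz
        rw [hH, map_smul] at h1
        have h2 : Y ((X^(k+1)) z) = (((k:ℂ)+1)*((n:ℂ)-(k:ℂ))) • ((X^k) z) := by
          rw [h1]; module
        rw [pow_succ, Module.End.mul_apply, h2, map_smul, ih (by omega), smul_smul]
        congr 1
        rw [an_succ]
        push_cast [Nat.cast_sub hk']
        ring
  have bs2 : ∀ (n : ℕ) (z z' : V), Y z = 0 → Y z' = 0 → H z' = -(n:ℂ)•z' →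
      H z = -(n:ℂ)•z - z' → ∀ k, k ≤ n+1 →
      (Y^k) ((X^k) z) = ((an n k : ℕ) : ℂ) • z + ((bn n k : ℕ) : ℂ) • z' := by
    intro n z z' hz hz' hHz' hHz k
    induction k with
    | zero => intro _; simp [an, bn]
    | succ k ih =>
        intro hk
        have hk' : k ≤ n := by omega
        have h1 := Yapp k z hz
        rw [hHz, map_sub, map_smul] at h1
        have h2 : Y ((X^(k+1)) z)
            = (((k:ℂ)+1)*((n:ℂ)-(k:ℂ))) • ((X^k) z) + (((k:ℂ)+1)) • ((X^k) z') := by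
          rw [h1]; module
        rw [pow_succ, Module.End.mul_apply, h2, map_add, map_smul, map_smul, ih (by omega),
          bs1 n z' hz' hHz' k (by omega)]
        rw [show bn n (k+1) = (k+1)*(n-k)*(bn n k) + (k+1)*(an n k) from rfl, an_succ]
        push_cast [Nat.cast_sub hk']
        module
  have SS2 : ∀ (n : ℕ) (z : V), Y z = 0 → (((Y*X) - (n:ℂ)•1)^(2:ℕ)) z = 0 →
      ((Y*X) - (n:ℂ)•1) z = 0 := by
    intro n z hz h2
    by_contra hne
    set z' := ((Y*X) - (n:ℂ)•1) z with hz'def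
    have hexp : z' = (Y*X) z - (n:ℂ)•z := by
      rw [hz'def, LinearMap.sub_apply, LinearMap.smul_apply, Module.End.one_apply]
    have hYz' : Y z' = 0 := by
      rw [hexp, map_sub, map_smul, kerY_P z hz, hz, smul_zero, sub_zero]
    have hPz'' : ((Y*X) - (n:ℂ)•1) z' = 0 := by
      rw [hz'def, ← Module.End.mul_apply, ← pow_two]; exact h2
    have hPz' : (Y*X) z' = (n:ℂ) • z' := by
      rw [LinearMap.sub_apply, LinearMap.smul_apply, Module.End.one_apply, sub_eq_zero] at hPz''
      exact hPz''
    have hQz : (X*Y) z = 0 := hkerY z hz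
    have hQz' : (X*Y) z' = 0 := hkerY z' hYz'
    have hHz' : H z' = -(n:ℂ) • z' := by
      rw [← hXY, LinearMap.sub_apply, hQz', hPz']
      module
    have hHz : H z = -(n:ℂ) • z - z' := by
      rw [← hXY, LinearMap.sub_apply, hQz, hexp]
      module
    have hstr := bs2 n z z' hz hYz' hHz' hHz (n+1) le_rfl
    have han : ((an n (n+1) : ℕ) : ℂ) = 0 := by
      rw [an_succ]; simp [Nat.sub_self]
    rw [han, zero_smul, zero_add] at hstr
    have hbnne : ((bn n (n+1) : ℕ) : ℂ) ≠ 0 := by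
      rw [Nat.cast_ne_zero]
      show (n+1)*(n-n)*(bn n n) + (n+1)*(an n n) ≠ 0
      rw [Nat.sub_self]
      simpa using Nat.mul_ne_zero (Nat.succ_ne_zero n) (an_ne_zero n)
    have hW0 : (X^(n+1)) z ≠ 0 := by
      intro hc
      rw [hc, map_zero] at hstr
      exact hne ((smul_eq_zero.mp hstr.symm).resolve_left hbnne)
    have hzP : z ∈ (Y*X).maxGenEigenspace (n:ℂ) :=
      (Module.End.mem_maxGenEigenspace _ _ _).mpr ⟨2, h2⟩
    have hzQ : z ∈ (X*Y).maxGenEigenspace 0 :=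
      (Module.End.mem_maxGenEigenspace _ _ _).mpr ⟨1, by simpa using hQz⟩
    obtain ⟨hm1, hm2⟩ := chain_mem hiPQ hiPX hiQXm hzP hzQ (n+1)
    rw [show (((n+1:ℕ):ℂ)) * ((n:ℂ) - ((n+1:ℕ):ℂ) + 1) = 0 by push_cast; ring] at hm2
    obtain ⟨i, hi⟩ := natX hW0 hm1 hm2
    have hiz : ((i + n + 2 : ℕ) : ℂ) = 0 := by
      push_cast at hi ⊢
      linear_combination -hi
    rw [Nat.cast_eq_zero] at hiz
    omega
  have SSfull : ∀ (k : ℕ) (z : V), Y z = 0 → (((Y*X) - (r:ℂ)•1)^k) z = 0 →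
      ((Y*X) - (r:ℂ)•1) z = 0 := by
    intro k
    induction k with
    | zero =>
        intro z _ h
        rw [pow_zero, Module.End.one_apply] at h
        rw [h, map_zero]
    | succ k ih =>
        intro z hz h
        have hy : Y (((Y*X) - (r:ℂ)•1) z) = 0 := by
          rw [LinearMap.sub_apply, LinearMap.smul_apply, Module.End.one_apply, map_sub, map_smul,
            kerY_P z hz, hz, smul_zero, sub_zero]
        have h' : (((Y*X) - (r:ℂ)•1)^k) (((Y*X) - (r:ℂ)•1) z) = 0 := by
          rw [← Module.End.mul_apply, ← pow_succ]; exact h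
        have h2 := ih _ hy h'
        exact SS2 r z hz (by rw [pow_two, Module.End.mul_apply]; exact h2)
  have pieceP : ∀ (p : ℂ) (w : V), w ∈ (Y*X).maxGenEigenspace p →
      w ∈ (X*Y).maxGenEigenspace 0 → B u w = 0 := by
    intro p w hwp hwq
    by_cases hw0 : w = 0
    · rw [hw0, map_zero]
    obtain ⟨n, rfl⟩ := natX hw0 hwp hwq
    by_cases hnr : n = r
    · subst hnr
      have hYw : Y w = 0 := by
        by_contra hYw0
        have hmapped := map_mem hiPQ.symm hiQY hiPYm hwq hwp
        obtain ⟨j, hj⟩ := natY hYw0 hmapped.1 hmapped.2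
        have hjz : ((j + n + 2 : ℕ) : ℂ) = 0 := by
          push_cast at hj ⊢
          linear_combination -hj
        rw [Nat.cast_eq_zero] at hjz
        omega
      obtain ⟨kp, hkp⟩ := (Module.End.mem_maxGenEigenspace _ _ _).mp hwp
      have hPw0 := SSfull kp w hYw hkp
      have hPw : (Y*X) w = (n:ℂ)•w := by
        rw [LinearMap.sub_apply, LinearMap.smul_apply, Module.End.one_apply, sub_eq_zero] at hPw0
        exact hPw0
      have hQw : (X*Y) w = 0 := hkerY w hYw
      have hHw : H w = -(n:ℂ)•w := by
        rw [← hXY, LinearMap.sub_apply, hQw, hPw]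
        module
      have hv1 : H ((X^n) w) = (n:ℂ) • ((X^n) w) := by
        have h := congrArg (fun f : Module.End ℂ V => f w) (iHXpow hHX n)
        simp only [Module.End.mul_apply, LinearMap.add_apply, LinearMap.smul_apply] at h
        rw [hHw, map_smul] at h
        rw [h]
        module
      have hv2 : X ((X^n) w) = 0 := by
        by_contra hc
        have hXr : (X^(n+1)) w = X ((X^n) w) := by rw [pow_succ', Module.End.mul_apply]
        have hW : (X^(n+1)) w ≠ 0 := by rw [hXr]; exact hc
        obtain ⟨hm1, hm2⟩ := chain_mem hiPQ hiPX hiQXm hwp hwq (n+1)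
        rw [show (((n+1:ℕ):ℂ)) * ((n:ℂ) - ((n+1:ℕ):ℂ) + 1) = 0 by push_cast; ring] at hm2
        obtain ⟨i, hi⟩ := natX hW hm1 hm2
        have hiz : ((i + n + 2 : ℕ) : ℂ) = 0 := by
          push_cast at hi ⊢
          linear_combination -hi
        rw [Nat.cast_eq_zero] at hiz
        omega
      have hstr := bs1 n w hYw hHw n (by omega)
      have hBv := hyp ((X^n) w) hv1 hv2
      rw [hstr, map_smul, smul_eq_mul] at hBv
      exact (mul_eq_zero.mp hBv).resolve_left (Nat.cast_ne_zero.mpr (an_ne_zero n))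
    · obtain ⟨kp, hkp⟩ := (Module.End.mem_maxGenEigenspace _ _ _).mp hwp
      obtain ⟨kq, hkq⟩ := (Module.End.mem_maxGenEigenspace _ _ _).mp hwq
      have hkq' : ((X*Y) ^ kq) w = 0 := by simpa using hkq
      have hcomm : Commute (X*Y) (-((Y*X) - (n:ℂ)•1)) := by
        have c1 : Commute (X*Y) (Y*X) := hiPQ.symm
        exact (c1.sub_right ((Commute.one_right _).smul_right _)).neg_right
      have hD : ((-((Y*X) - (n:ℂ)•1)) ^ kp) w = 0 := by
        rw [neg_pow, Module.End.mul_apply, hkp, map_zero]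
      have hsum := add_pow_apply_zero hcomm hkq' hD
      have hHop : H - (-(n:ℂ))•1 = (X*Y) + -((Y*X) - (n:ℂ)•1) := by
        rw [← hXY]
        module
      refine L2gen (-(n:ℂ)) ?_ (kq + kp) w ?_
      · intro hc
        exact hnr (by exact_mod_cast neg_injective hc)
      · rw [hHop]; exact hsum
  intro w
  suffices hsuff : (⊤ : Submodule ℂ V) ≤ LinearMap.ker (B u) by
    exact LinearMap.mem_ker.mp (hsuff Submodule.mem_top)
  rw [← Module.End.iSup_maxGenEigenspace_eq_top (X*Y)]
  apply iSup_le
  intro μ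
  by_cases hμ : μ = 0
  · subst hμ
    have hmapsTo := Module.End.mapsTo_maxGenEigenspace_of_comm hiPQ.symm (0:ℂ)
    have hrestrict : ∀ x : V, x ∈ (X*Y).maxGenEigenspace (0:ℂ) →
        (Y*X) x ∈ (X*Y).maxGenEigenspace (0:ℂ) := fun x hx => hmapsTo hx
    intro x hx
    have hx3 : x ∈ ⨆ ν : ℂ, Submodule.map ((X*Y).maxGenEigenspace (0:ℂ)).subtype
        (Module.End.maxGenEigenspace (LinearMap.restrict (Y*X) hrestrict) ν) := by
      rw [← Submodule.map_iSup, Module.End.iSup_maxGenEigenspace_eq_top]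
      exact Submodule.mem_map.mpr ⟨⟨x, hx⟩, Submodule.mem_top, rfl⟩
    have hle : (⨆ ν : ℂ, Submodule.map ((X*Y).maxGenEigenspace (0:ℂ)).subtype
        (Module.End.maxGenEigenspace (LinearMap.restrict (Y*X) hrestrict) ν))
        ≤ LinearMap.ker (B u) := by
      apply iSup_le
      intro ν
      rintro y ⟨⟨z, hzK⟩, hzmem, rfl⟩
      rw [LinearMap.mem_ker]
      have hzP : z ∈ (Y*X).maxGenEigenspace ν := by
        have hres := Module.End.genEigenspace_restrict (Y*X) _ ⊤ ν hrestrict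
        have hzmem2 : (⟨z, hzK⟩ : ((X*Y).maxGenEigenspace (0:ℂ)))
            ∈ Module.End.genEigenspace (LinearMap.restrict (Y*X) hrestrict) ν ⊤ := hzmem
        rw [hres] at hzmem2
        exact Submodule.mem_comap.mp hzmem2
      exact pieceP ν z hzP hzK
    exact hle hx3
  · intro x hx
    rw [LinearMap.mem_ker]
    obtain ⟨k, hk⟩ := (Module.End.mem_maxGenEigenspace _ _ _).mp hx
    exact bQgen μ hμ k x hk

private lemma adj_pow {V : Type*} [AddCommGroup V] [Module ℂ V] (B : V →ₗ[ℂ] V →ₗ[ℂ] ℂ)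
    (Y : Module.End ℂ V) (hYsa : ∀ u v, B (Y u) v = B u (Y v)) :
    ∀ (k : ℕ) (a b : V), B ((Y^k) a) b = B a ((Y^k) b) := by
  intro k
  induction k with
  | zero => intro a b; simp
  | succ k ih =>
      intro a b
      have h1 : (Y^(k+1)) a = (Y^k) (Y a) := by rw [pow_succ, Module.End.mul_apply]
      have h2 : (Y^(k+1)) b = Y ((Y^k) b) := by rw [pow_succ', Module.End.mul_apply]
      rw [h1, ih (Y a) b, hYsa, ← h2]

/-- Let `B` be a nondegenerate symmetric or skew-symmetric bilinear form on a
complex vector space `V`, let `X` be a nonzero nilpotent self-adjoint endomorphism of `V`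
extended to an `sl₂`-triple `(H, X, Y)` with `Y` self-adjoint and `H` anti-self-adjoint,
and let `Hr` be the highest weight space of weight `r` (vectors killed by `X` of
`H`-eigenvalue `r`).  Then the bilinear form `(u,v)_r := B(u, Y^r v)` on `Hr` is
nondegenerate, and it is symmetric if `B` is symmetric and skew-symmetric if `B` is
skew-symmetric. -/
theorem stmt2 {V : Type*} [AddCommGroup V] [Module ℂ V] [FiniteDimensional ℂ V]
    (B : V →ₗ[ℂ] V →ₗ[ℂ] ℂ)
    (hB : ∀ u : V, (∀ v : V, B u v = 0) → u = 0)
    (hsym : (∀ u v : V, B u v = B v u) ∨ (∀ u v : V, B u v = - B v u))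
    (X Y H : Module.End ℂ V)
    (hX : X ≠ 0) (hnil : IsNilpotent X)
    (hXsa : ∀ u v, B (X u) v = B u (X v))
    (hYsa : ∀ u v, B (Y u) v = B u (Y v))
    (hHa : ∀ u v, B (H u) v = - B u (H v))
    (hHX : H * X - X * H = 2 • X)
    (hHY : H * Y - Y * H = -(2 • Y))
    (hXY : X * Y - Y * X = H)
    (r : ℕ)
    (Hr : Submodule ℂ V)
    (hHr : Hr = Module.End.eigenspace H (r : ℂ) ⊓ LinearMap.ker X) :
    (∀ u ∈ Hr, (∀ v ∈ Hr, B u ((Y ^ r) v) = 0) → u = 0) ∧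
    ((∀ u v : V, B u v = B v u) →
      ∀ u ∈ Hr, ∀ v ∈ Hr, B u ((Y ^ r) v) = B v ((Y ^ r) u)) ∧
    ((∀ u v : V, B u v = - B v u) →
      ∀ u ∈ Hr, ∀ v ∈ Hr, B u ((Y ^ r) v) = - B v ((Y ^ r) u)) := by
  subst hHr
  refine ⟨?_, ?_, ?_⟩
  · intro u hu hvv
    rw [Submodule.mem_inf, Module.End.mem_eigenspace_iff, LinearMap.mem_ker] at hu
    apply hB
    apply bkey B X Y H hXsa hHa hHX hHY hXY r u hu.1 hu.2
    intro v hv1 hv2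
    exact hvv v (Submodule.mem_inf.mpr
      ⟨Module.End.mem_eigenspace_iff.mpr hv1, LinearMap.mem_ker.mpr hv2⟩)
  · intro hs u _ v _
    calc B u ((Y^r) v) = B ((Y^r) v) u := hs _ _
      _ = B v ((Y^r) u) := adj_pow B Y hYsa r v u
  · intro hs u _ v _
    calc B u ((Y^r) v) = -B ((Y^r) v) u := hs _ _
      _ = -B v ((Y^r) u) := by rw [adj_pow B Y hYsa r v u]
end

section
/- Let X be a nilpotent self-adjoint endomorphism of \u2102^m with respect to a nondegenerate symplectic form, with Jordan partition having conjugate partition (s_1, s_2, ...). Then the dimension of the Sp(V)-orbit of X under conjugation equals (m^2 - \u03a3_i s_i^2)/2. -/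
/-!
Let `θ Z = J⁻¹ Zᵀ J` be the adjoint with respect to the form. It is an involution of `𝔤𝔩(V)`,
with `(-1)`-eigenspace `sp(V)` and `(+1)`-eigenspace the self-adjoint maps `𝒜`.
As `X` is self-adjoint, `ad X` anticommutes with `θ`, so it exchanges `sp(V)` and `𝒜`; it is
also skew for the trace form, which is `θ`-invariant and nondegenerate, so `sp(V) ⊥ 𝒜`.
The pairing `(A, B) ↦ tr ([X, A] B)` on `sp(V) × 𝒜` therefore has left kernel `𝔷(X) ∩ sp(V)` and
right kernel `𝔷(X) ∩ 𝒜`, whence `dim sp(V) - dim 𝔷(X) ∩ sp(V) = dim 𝒜 - dim 𝔷(X) ∩ 𝒜`; adding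
the two sides gives `m² - dim 𝔷(X)`, where `𝔷(X)` is the full centralizer of `X`.

For nilpotent `X`, `dim 𝔷(X) = Σ sᵢ²`: restricting centralizing maps to `W = range X` is onto
the centralizer of `X|_W`, with kernel `Hom(V ⧸ W, ker X)`, so
`dim 𝔷(X) = dim 𝔷(X|_W) + (dim ker X)²`, and `X|_W` has conjugate partition `(s₂, s₃, …)`.
-/

open Matrix

/-- The isometry Lie algebra of the bilinear form with matrix `J`:
`{Z : Zᵀ * J + J * Z = 0}`. -/
noncomputable def isomAlg (m : ℕ) (J : Matrix (Fin m) (Fin m) ℂ) :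
    Submodule ℂ (Matrix (Fin m) (Fin m) ℂ) :=
  LinearMap.ker
    ((LinearMap.mulRight ℂ J).comp
        (Matrix.transposeLinearEquiv (Fin m) (Fin m) ℂ ℂ).toLinearMap +
      LinearMap.mulLeft ℂ J)

/-- The stabilizer (centralizer) of `X` inside the isometry Lie algebra of `J`. -/
noncomputable def stabAlg (m : ℕ) (J X : Matrix (Fin m) (Fin m) ℂ) :
    Submodule ℂ (Matrix (Fin m) (Fin m) ℂ) :=
  isomAlg m J ⊓ LinearMap.ker (LinearMap.mulLeft ℂ X - LinearMap.mulRight ℂ X)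

open Module LinearMap Module.End

theorem LinearMap.finrank_range_flip {K M N : Type*} [Field K] [AddCommGroup M] [Module K M]
    [AddCommGroup N] [Module K N] [FiniteDimensional K M] [FiniteDimensional K N]
    (B : M →ₗ[K] N →ₗ[K] K) : finrank K (range B.flip) = finrank K (range B) := by
  have hB : B.flip = B.dualMap ∘ₗ Module.Dual.eval K N := rfl
  have heval : range (Module.Dual.eval K N) = ⊤ :=
    range_eq_top.mpr (Module.evalEquiv K N).surjective
  rw [hB, range_comp_of_range_eq_top _ heval, finrank_range_dualMap_eq_finrank_range]

theorem Submodule.finrank_comap_subtype {R M : Type*} [Ring R] [AddCommGroup M] [Module R M]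
    (p q : Submodule R M) : finrank R (q.comap p.subtype) = finrank R ↥(p ⊓ q) := by
  rw [← Submodule.map_comap_subtype, Submodule.finrank_map_subtype_eq]

namespace Module.End

variable {K M : Type*} [Field K] [AddCommGroup M] [Module K M] {θ T : Module.End K M}

theorem apply_mem_eigenspace_neg (hTθ : ∀ x, T (θ x) = -θ (T x)) {μ : K} {x : M}
    (hx : x ∈ eigenspace θ μ) : T x ∈ eigenspace θ (-μ) := by
  rw [mem_eigenspace_iff] at hx ⊢
  rw [neg_smul, ← map_smul, ← hx, hTθ, neg_neg]

variable [NeZero (2 : K)]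

theorem eq_zero_of_mem_eigenspace_one_of_mem_eigenspace_neg_one {x : M}
    (hp : x ∈ eigenspace θ 1) (hn : x ∈ eigenspace θ (-1)) : x = 0 := by
  rw [mem_eigenspace_iff] at hp hn
  have : (2 : K) • x = 0 := by
    rw [two_smul]; nth_rw 1 [← one_smul K x]; rw [← hp, hn, neg_one_smul, neg_add_cancel]
  exact (smul_eq_zero.mp this).resolve_left two_ne_zero

theorem eigenspace_one_inf_sup_eigenspace_neg_one_inf (hθ : Function.Involutive θ)
    {S : Submodule K M} (hS : ∀ x ∈ S, θ x ∈ S) :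
    eigenspace θ 1 ⊓ S ⊔ eigenspace θ (-1) ⊓ S = S := by
  refine le_antisymm (sup_le inf_le_right inf_le_right) fun x hx => ?_
  have hsum : x = (2⁻¹ : K) • (x + θ x) + (2⁻¹ : K) • (x - θ x) := by
    rw [← smul_add, add_add_sub_cancel, ← two_smul K, smul_smul, inv_mul_cancel₀ two_ne_zero,
      one_smul]
  rw [hsum]
  refine Submodule.add_mem_sup
    (Submodule.mem_inf.mpr ⟨?_, S.smul_mem _ (S.add_mem hx (hS x hx))⟩)
    (Submodule.mem_inf.mpr ⟨?_, S.smul_mem _ (S.sub_mem hx (hS x hx))⟩)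
  · rw [mem_eigenspace_iff]; simp only [map_smul, map_add, hθ x]; module
  · rw [mem_eigenspace_iff]; simp only [map_smul, map_sub, hθ x]; module

theorem eigenspace_one_sup_eigenspace_neg_one (hθ : Function.Involutive θ) :
    eigenspace θ 1 ⊔ eigenspace θ (-1) = ⊤ := by
  simpa using eigenspace_one_inf_sup_eigenspace_neg_one_inf hθ (S := ⊤) fun _ _ => trivial

theorem finrank_eigenspace_one_inf_add_finrank_eigenspace_neg_one_inf [FiniteDimensional K M]
    (hθ : Function.Involutive θ) {S : Submodule K M} (hS : ∀ x ∈ S, θ x ∈ S) :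
    finrank K ↥(eigenspace θ 1 ⊓ S) + finrank K ↥(eigenspace θ (-1) ⊓ S) = finrank K S := by
  have hdisj : eigenspace θ 1 ⊓ S ⊓ (eigenspace θ (-1) ⊓ S) = ⊥ :=
    (Submodule.eq_bot_iff _).mpr fun x hx =>
      eq_zero_of_mem_eigenspace_one_of_mem_eigenspace_neg_one hx.1.1 hx.2.1
  rw [← Submodule.finrank_sup_add_finrank_inf_eq, hdisj, finrank_bot, add_zero,
    eigenspace_one_inf_sup_eigenspace_neg_one_inf hθ hS]

theorem apply_eq_zero_of_mem_eigenspace {B : M →ₗ[K] M →ₗ[K] K}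
    (hBθ : ∀ x y, B (θ x) (θ y) = B x y) {μ ν : K} (hμν : μ * ν = -1) {x y : M}
    (hx : x ∈ eigenspace θ μ) (hy : y ∈ eigenspace θ ν) : B x y = 0 := by
  rw [mem_eigenspace_iff] at hx hy
  have h := hBθ x y
  simp only [hx, hy, map_smul, LinearMap.smul_apply, smul_eq_mul] at h
  have h2 : (2 : K) * B x y = 0 := by linear_combination -h + B x y * hμν
  exact (mul_eq_zero.mp h2).resolve_left two_ne_zero

theorem eq_zero_of_apply_eigenspace_eq_zero {B : M →ₗ[K] M →ₗ[K] K}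
    (hθ : Function.Involutive θ) (hB : B.SeparatingLeft) {y : M}
    (hp : ∀ x ∈ eigenspace θ 1, B y x = 0) (hn : ∀ x ∈ eigenspace θ (-1), B y x = 0) :
    y = 0 := by
  refine hB y fun x => ?_
  have : eigenspace θ 1 ⊔ eigenspace θ (-1) ≤ ker (B y) := sup_le hp hn
  rw [eigenspace_one_sup_eigenspace_neg_one hθ] at this
  exact this Submodule.mem_top

variable {β : LinearMap.BilinForm K M}

theorem ker_compl₁₂_eigenspace (hθ : Function.Involutive θ) (hTθ : ∀ x, T (θ x) = -θ (T x))
    (hβθ : ∀ x y, β (θ x) (θ y) = β x y) (hβ : β.SeparatingLeft) :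
    ker (β.compl₁₂ (T ∘ₗ (eigenspace θ (-1)).subtype) (eigenspace θ 1).subtype) =
      (ker T).comap (eigenspace θ (-1)).subtype := by
  ext ⟨a, ha⟩
  simp only [mem_ker, Submodule.mem_comap, Submodule.subtype_apply]
  constructor
  · intro h
    have hTa : T a ∈ eigenspace θ 1 := by simpa using apply_mem_eigenspace_neg hTθ ha
    exact eq_zero_of_apply_eigenspace_eq_zero hθ hβ (fun x hx => LinearMap.congr_fun h ⟨x, hx⟩)
      fun x hx => apply_eq_zero_of_mem_eigenspace hβθ (by norm_num) hTa hx
  · intro h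
    ext b
    simp [h]

theorem ker_compl₁₂_eigenspace_flip (hθ : Function.Involutive θ)
    (hTθ : ∀ x, T (θ x) = -θ (T x)) (hβθ : ∀ x y, β (θ x) (θ y) = β x y)
    (hβT : ∀ x y, β (T x) y = -β x (T y)) (hβ : β.SeparatingRight) :
    ker (β.compl₁₂ (T ∘ₗ (eigenspace θ (-1)).subtype) (eigenspace θ 1).subtype).flip =
      (ker T).comap (eigenspace θ 1).subtype := by
  ext ⟨b, hb⟩
  simp only [mem_ker, Submodule.mem_comap, Submodule.subtype_apply]
  constructor
  · intro h
    have hTb : T b ∈ eigenspace θ (-1) := apply_mem_eigenspace_neg hTθ hb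
    refine eq_zero_of_apply_eigenspace_eq_zero (B := β.flip) hθ (flip_separatingLeft.mpr hβ)
      (fun x hx => apply_eq_zero_of_mem_eigenspace hβθ (by norm_num) hx hTb) fun x hx => ?_
    have := LinearMap.congr_fun h ⟨x, hx⟩
    simpa [hβT] using this
  · intro h
    ext a
    simp [hβT, h]

theorem two_mul_finrank_eigenspace_neg_one_sub_finrank_inf_ker [FiniteDimensional K M]
    (hθ : Function.Involutive θ) (hTθ : ∀ x, T (θ x) = -θ (T x))
    (hβθ : ∀ x y, β (θ x) (θ y) = β x y) (hβT : ∀ x y, β (T x) y = -β x (T y))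
    (hβ : β.Nondegenerate) :
    2 * ((finrank K (eigenspace θ (-1)) : ℤ) - finrank K ↥(eigenspace θ (-1) ⊓ ker T)) =
      finrank K M - finrank K (ker T) := by
  set Φ := β.compl₁₂ (T ∘ₗ (eigenspace θ (-1)).subtype) (eigenspace θ 1).subtype
  have hn := Φ.finrank_range_add_finrank_ker
  have hp := Φ.flip.finrank_range_add_finrank_ker
  rw [ker_compl₁₂_eigenspace hθ hTθ hβθ hβ.1, Submodule.finrank_comap_subtype] at hn
  rw [ker_compl₁₂_eigenspace_flip hθ hTθ hβθ hβT hβ.2, Submodule.finrank_comap_subtype,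
    finrank_range_flip] at hp
  have htop := finrank_eigenspace_one_inf_add_finrank_eigenspace_neg_one_inf hθ (S := ⊤)
    fun _ _ => trivial
  have hker := finrank_eigenspace_one_inf_add_finrank_eigenspace_neg_one_inf hθ (S := ker T)
    fun x hx => by rw [mem_ker, hTθ, mem_ker.mp hx, map_zero, neg_zero]
  rw [inf_top_eq, inf_top_eq, finrank_top] at htop
  omega

end Module.End

def commutant (R : Type*) {A : Type*} [CommRing R] [Ring A] [Algebra R A] (a : A) :
    Submodule R A :=
  ker (mulLeft R a - mulRight R a)

theorem mem_commutant {R A : Type*} [CommRing R] [Ring A] [Algebra R A] {a b : A} :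
    b ∈ commutant R a ↔ a * b = b * a := by
  simp [commutant, sub_eq_zero]

theorem AlgEquiv.map_commutant {R A B : Type*} [CommRing R] [Ring A] [Ring B] [Algebra R A]
    [Algebra R B] (e : A ≃ₐ[R] B) (a : A) :
    (commutant R a).map e.toLinearMap = commutant R (e a) := by
  ext b
  rw [Submodule.mem_map_equiv (e := e.toLinearEquiv), mem_commutant, mem_commutant]
  conv_rhs => rw [← e.apply_symm_apply b, ← map_mul, ← map_mul, e.injective.eq_iff]
  rfl

theorem AlgEquiv.finrank_commutant {R A B : Type*} [CommRing R] [Ring A] [Ring B] [Algebra R A]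
    [Algebra R B] (e : A ≃ₐ[R] B) (a : A) :
    finrank R (commutant R (e a)) = finrank R (commutant R a) := by
  rw [← e.map_commutant]
  exact e.toLinearEquiv.finrank_map_eq _

namespace Module.End

variable {K V : Type*} [Field K] [AddCommGroup V] [Module K V]

theorem pow_finrank_eq_zero [FiniteDimensional K V] {f : Module.End K V} (hf : IsNilpotent f) :
    f ^ finrank K V = 0 := by
  simpa [hf.charpoly_eq_X_pow_finrank] using f.aeval_self_charpoly

def restrictRange (f : Module.End K V) : Module.End K (range f) :=
  f.restrict fun x _ => mem_range_self f x

theorem coe_restrictRange_pow_apply (f : Module.End K V) (i : ℕ) (w : range f) :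
    ((f.restrictRange ^ i) w : V) = (f ^ i) w := by
  rw [restrictRange, pow_restrict]
  rfl

theorem restrictRange_pow_eq_zero {f : Module.End K V} {N : ℕ} (h : f ^ (N + 1) = 0) :
    f.restrictRange ^ N = 0 := by
  ext ⟨_, v, rfl⟩
  rw [coe_restrictRange_pow_apply, ← mul_apply, ← pow_succ, h]
  rfl

theorem finrank_range_restrictRange_pow (f : Module.End K V) (i : ℕ) :
    finrank K (range (f.restrictRange ^ i)) = finrank K (range (f ^ (i + 1))) := by
  have h : (range f).subtype ∘ₗ f.restrictRange ^ i = (f ^ i) ∘ₗ (range f).subtype :=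
    LinearMap.ext (coe_restrictRange_pow_apply f i)
  rw [← Submodule.finrank_map_subtype_eq, ← range_comp, h, range_comp, Submodule.range_subtype,
    ← range_comp, pow_succ, mul_eq_comp]

theorem mapsTo_range_of_commute {f φ : Module.End K V} (h : f * φ = φ * f) :
    ∀ x ∈ range f, φ x ∈ range f := by
  rintro _ ⟨v, rfl⟩
  exact ⟨φ v, by rw [← mul_apply, h, mul_apply]⟩

def commutantRestrictRange (f : Module.End K V) :
    commutant K f →ₗ[K] commutant K f.restrictRange where
  toFun φ :=
    ⟨(φ : Module.End K V).restrict (mapsTo_range_of_commute (mem_commutant.mp φ.2)),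
      mem_commutant.mpr
        (restrict_commute (mem_commutant.mp φ.2) _ _)⟩
  map_add' _ _ := by ext; simp
  map_smul' _ _ := by ext; simp

theorem coe_commutantRestrictRange_apply (f : Module.End K V)
    (φ : commutant K f) (w : range f) :
    ((f.commutantRestrictRange φ : Module.End K (range f)) w : V) = (φ : Module.End K V) w :=
  rfl

theorem commutantRestrictRange_surjective (f : Module.End K V) :
    Function.Surjective f.commutantRestrictRange := by
  rintro ⟨ψ, hψ⟩
  rw [mem_commutant] at hψ
  obtain ⟨π, hπ⟩ := (range f).subtype.exists_leftInverse_of_injective (range f).ker_subtype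
  obtain ⟨s, hs⟩ := f.rangeRestrict.exists_rightInverse_of_surjective f.range_rangeRestrict
  have hπ' (w : range f) : π w = w := LinearMap.congr_fun hπ w
  have hs' (w : range f) : f (s w) = w := congrArg Subtype.val (LinearMap.congr_fun hs w)
  have hψ' (w : range f) : f (ψ w) = ψ (f.restrictRange w) :=
    congrArg Subtype.val (LinearMap.congr_fun hψ w)
  -- `φ` is `ψ` on `range f` (`π` is a retraction onto it); the `s`-term makes it commute with `f`
  let φ : Module.End K V :=
    (range f).subtype ∘ₗ ψ ∘ₗ π + s ∘ₗ ψ ∘ₗ (f.rangeRestrict - f.restrictRange ∘ₗ π)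
  have hrr (w : range f) : f.rangeRestrict w = f.restrictRange w := rfl
  have hφW (w : range f) : φ w = ψ w := by
    simp [φ, hπ', hrr]
  have hφ : φ ∈ commutant K f := by
    rw [mem_commutant]
    ext v
    have hfv : π (f v) = f.rangeRestrict v := hπ' (f.rangeRestrict v)
    have hfrr : f.rangeRestrict (f v) = f.restrictRange (f.rangeRestrict v) := rfl
    simp [φ, hs', hψ', hfv, hfrr]
  exact ⟨⟨φ, hφ⟩, Subtype.ext (LinearMap.ext fun w => Subtype.ext (hφW w))⟩

def commutantOfQuotientRange (f : Module.End K V) :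
    (V ⧸ range f →ₗ[K] ker f) →ₗ[K] commutant K f where
  toFun g := ⟨(ker f).subtype ∘ₗ g ∘ₗ (range f).mkQ, by
    rw [mem_commutant]
    ext v
    simp [(Submodule.Quotient.mk_eq_zero _).mpr (mem_range_self f v)]⟩
  map_add' _ _ := by ext; simp
  map_smul' _ _ := by ext; simp

theorem commutantOfQuotientRange_injective (f : Module.End K V) :
    Function.Injective f.commutantOfQuotientRange := by
  intro g h hgh
  ext v
  exact LinearMap.congr_fun (congrArg Subtype.val hgh) v

theorem ker_commutantRestrictRange (f : Module.End K V) :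
    ker f.commutantRestrictRange = range f.commutantOfQuotientRange := by
  apply le_antisymm
  · rintro ⟨φ, hφ⟩ hφW
    have hφW' (w : range f) : φ w = 0 :=
      congrArg Subtype.val (LinearMap.congr_fun (congrArg Subtype.val (mem_ker.mp hφW)) w)
    have hφf (v : V) : φ v ∈ ker f := by
      rw [mem_ker, ← mul_apply, (mem_commutant.mp hφ), mul_apply]
      exact hφW' ⟨f v, mem_range_self f v⟩
    refine ⟨(range f).liftQ (codRestrict (ker f) φ hφf) fun w hw => ?_, ?_⟩
    · exact Subtype.ext (hφW' ⟨w, hw⟩)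
    · ext v
      rfl
  · rintro _ ⟨g, rfl⟩
    rw [mem_ker]
    ext w
    simp [coe_commutantRestrictRange_apply, commutantOfQuotientRange,
      (Submodule.Quotient.mk_eq_zero _).mpr w.2]

theorem finrank_commutant_eq [FiniteDimensional K V] (f : Module.End K V) :
    finrank K (commutant K f) =
      finrank K (commutant K f.restrictRange) + finrank K (ker f) ^ 2 := by
  have hrank :=
    LinearMap.finrank_range_add_finrank_ker (V := commutant K f) (V₂ := commutant K f.restrictRange)
      f.commutantRestrictRange
  rw [range_eq_top.mpr f.commutantRestrictRange_surjective, finrank_top,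
    ker_commutantRestrictRange,
    finrank_range_of_inj f.commutantOfQuotientRange_injective, finrank_linearMap] at hrank
  have hquot := (range f).finrank_quotient_add_finrank
  have hnull := f.finrank_range_add_finrank_ker
  rw [← hrank, sq]
  congr 2
  omega

theorem finrank_commutant_of_pow_eq_zero [FiniteDimensional K V] {f : Module.End K V} {N : ℕ}
    (hf : f ^ N = 0) :
    (finrank K (commutant K f) : ℤ) = ∑ i ∈ Finset.range N,
      ((finrank K (range (f ^ i)) : ℤ) - finrank K (range (f ^ (i + 1)))) ^ 2 := by
  induction N generalizing V with
  | zero =>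
    have : Subsingleton (Module.End K V) := subsingleton_of_zero_eq_one (hf.symm.trans (pow_zero f))
    simp [finrank_zero_of_subsingleton]
  | succ N ih =>
    have hnull := f.finrank_range_add_finrank_ker
    rw [finrank_commutant_eq, Nat.cast_add, ih (restrictRange_pow_eq_zero hf),
      Finset.sum_range_succ']
    simp_rw [finrank_range_restrictRange_pow]
    rw [zero_add, pow_zero, pow_one, one_eq_id, range_id, finrank_top, ← hnull]
    push_cast
    ring

end Module.End

theorem Matrix.finrank_commutant_of_isNilpotent {K n : Type*} [Field K] [Fintype n]
    [DecidableEq n] {X : Matrix n n K} (hX : IsNilpotent X) :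
    (finrank K (commutant K X) : ℤ) = ∑ i ∈ Finset.range (Fintype.card n),
      (((X ^ i).rank : ℤ) - (X ^ (i + 1)).rank) ^ 2 := by
  set e := Matrix.toLinAlgEquiv' (R := K) (n := n)
  have hf : e X ^ Fintype.card n = 0 := by
    simpa using End.pow_finrank_eq_zero (hX.map e)
  have hrank (i : ℕ) : (X ^ i).rank = finrank K (range (e X ^ i)) := by
    rw [← map_pow]
    rfl
  rw [← e.finrank_commutant, End.finrank_commutant_of_pow_eq_zero hf]
  simp only [hrank]

namespace Matrix

variable {K n : Type*} [Field K] [Fintype n]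

def traceMulForm : LinearMap.BilinForm K (Matrix n n K) :=
  (mul K (Matrix n n K)).compr₂ (traceLinearMap n K K)

theorem traceMulForm_apply (A B : Matrix n n K) : traceMulForm A B = trace (A * B) := rfl

theorem traceMulForm_nondegenerate :
    (traceMulForm : LinearMap.BilinForm K (Matrix n n K)).Nondegenerate :=
  ⟨fun A h => ext_iff_trace_mul_right.mpr fun B => by simpa [traceMulForm_apply] using h B,
    fun B h => ext_iff_trace_mul_left.mpr fun A => by simpa [traceMulForm_apply] using h A⟩

theorem traceMulForm_commutator (X A B : Matrix n n K) :
    traceMulForm (X * A - A * X) B = -traceMulForm A (X * B - B * X) := by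
  simp only [traceMulForm_apply, Matrix.sub_mul, Matrix.mul_sub, trace_sub, Matrix.mul_assoc]
  rw [trace_mul_comm X (A * B), Matrix.mul_assoc]
  ring

variable [DecidableEq n]

noncomputable def formAdjoint (J : Matrix n n K) : Module.End K (Matrix n n K) where
  toFun Z := J⁻¹ * Zᵀ * J
  map_add' _ _ := by simp [Matrix.mul_add, Matrix.add_mul]
  map_smul' _ _ := by simp

theorem formAdjoint_apply (J Z : Matrix n n K) : formAdjoint J Z = J⁻¹ * Zᵀ * J := rfl

variable {J : Matrix n n K} [Invertible J]

theorem formAdjoint_mul (A B : Matrix n n K) :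
    formAdjoint J (A * B) = formAdjoint J B * formAdjoint J A := by
  simp only [formAdjoint_apply, transpose_mul, Matrix.mul_assoc, mul_inv_cancel_left_of_invertible]

theorem trace_formAdjoint (A : Matrix n n K) : trace (formAdjoint J A) = trace A := by
  rw [formAdjoint_apply, trace_mul_cycle, mul_inv_of_invertible, Matrix.one_mul, trace_transpose]

theorem traceMulForm_formAdjoint (A B : Matrix n n K) :
    traceMulForm (formAdjoint J A) (formAdjoint J B) = traceMulForm A B := by
  rw [traceMulForm_apply, ← formAdjoint_mul, trace_formAdjoint, traceMulForm_apply, trace_mul_comm]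

theorem formAdjoint_involutive (hJ : Jᵀ = -J) : Function.Involutive (formAdjoint J) := by
  have hJinv : J⁻¹ᵀ = -J⁻¹ := by
    rw [transpose_nonsing_inv, hJ]
    exact inv_eq_left_inv (by simp)
  intro Z
  simp only [formAdjoint_apply, transpose_mul, transpose_transpose, hJ, hJinv, Matrix.mul_neg,
    Matrix.neg_mul, neg_neg, Matrix.mul_assoc, inv_mul_of_invertible, Matrix.mul_one,
    inv_mul_cancel_left_of_invertible]

theorem formAdjoint_eq_self_of_transpose_mul {X : Matrix n n K} (hX : Xᵀ * J = J * X) :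
    formAdjoint J X = X := by
  rw [formAdjoint_apply, Matrix.mul_assoc, hX, inv_mul_cancel_left_of_invertible]

theorem formAdjoint_commutator {X : Matrix n n K} (hX : formAdjoint J X = X) (Z : Matrix n n K) :
    X * formAdjoint J Z - formAdjoint J Z * X = -formAdjoint J (X * Z - Z * X) := by
  rw [map_sub, formAdjoint_mul, formAdjoint_mul, hX, neg_sub]

theorem mem_eigenspace_formAdjoint_neg_one_iff {Z : Matrix n n K} :
    Z ∈ eigenspace (formAdjoint J) (-1) ↔ Zᵀ * J + J * Z = 0 := by
  rw [mem_eigenspace_iff, formAdjoint_apply, neg_one_smul, ← add_eq_zero_iff_eq_neg]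
  constructor
  · intro h
    simpa [Matrix.mul_add, Matrix.mul_assoc] using congrArg (J * ·) h
  · intro h
    simpa [Matrix.mul_add, Matrix.mul_assoc] using congrArg (J⁻¹ * ·) h

end Matrix

theorem isomAlg_eq_eigenspace_formAdjoint (m : ℕ) (J : Matrix (Fin m) (Fin m) ℂ)
    [Invertible J] :
    isomAlg m J = eigenspace (Matrix.formAdjoint J) (-1) := by
  ext Z
  rw [Matrix.mem_eigenspace_formAdjoint_neg_one_iff]
  rfl

/-- Let `X` be a nilpotent self-adjoint endomorphism of `ℂ^m` with respect to
a nondegenerate symplectic form `J`, with Jordan partition having conjugate partition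
`s_i = rank X^{i-1} - rank X^i`.  The dimension of the `Sp(V)`-orbit of `X` under
conjugation (which equals `dim sp - dim` of the stabilizer Lie algebra of `X` in `sp`)
equals `(m² - Σ_i s_i²)/2`. -/
theorem stmt3 (m : ℕ) (J : Matrix (Fin m) (Fin m) ℂ)
    (hJskew : Jᵀ = -J) (hJ : IsUnit J)
    (X : Matrix (Fin m) (Fin m) ℂ)
    (hnil : IsNilpotent X) (hsa : Xᵀ * J = J * X) :
    2 * ((Module.finrank ℂ (isomAlg m J) : ℤ) - (Module.finrank ℂ (stabAlg m J X) : ℤ)) =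
      (m : ℤ) ^ 2 -
        ∑ i ∈ Finset.range m, (((X ^ i).rank : ℤ) - ((X ^ (i + 1)).rank : ℤ)) ^ 2 := by
  have := hJ.invertible
  have hX := Matrix.formAdjoint_eq_self_of_transpose_mul hsa
  have key := two_mul_finrank_eigenspace_neg_one_sub_finrank_inf_ker
    (Matrix.formAdjoint_involutive hJskew) (T := mulLeft ℂ X - mulRight ℂ X)
    (fun Z => by simpa using Matrix.formAdjoint_commutator hX Z)
    Matrix.traceMulForm_formAdjoint (Matrix.traceMulForm_commutator X)
    Matrix.traceMulForm_nondegenerate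
  have hcomm : ker (mulLeft ℂ X - mulRight ℂ X) = commutant ℂ X := rfl
  rw [← isomAlg_eq_eigenspace_formAdjoint, hcomm] at key
  rw [stabAlg, hcomm, key, Module.finrank_matrix, Fintype.card_fin, Module.finrank_self,
    Matrix.finrank_commutant_of_isNilpotent hnil, Fintype.card_fin]
  push_cast
  ring
end

section
/- For the root system of type C_\u2113 realized in the lattice {(a_1,...,a_\u2113) \u2208 \u2124^\u2113 : \u03a3 a_i even} with simple roots \u03b3_i = e_i - e_{i+1} (i < \u2113) and \u03b3_\u2113 = 2e_\u2113, the small dominant weights (those \u03bb with \u03bb \u2271 2\u03b3_0 for \u03b3_0 = e_1 + e_2 the highest short root) are exactly the weights (1^{2j} 0^{\u2113-2j}) for 0 \u2264 j \u2264 \u230a\u2113/2\u230b and (2, 1^{2j}, 0^{\u2113-2j-1}) for 0 \u2264 j \u2264 \u230a(\u2113-1)/2\u230b. -/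
/-!
The partial sums `S_m v = v_0 + ⋯ + v_{m-1}` are dual to the simple roots of `C_ℓ`:
`S_m γ_i = δ_{i+1,m}`, except that `S_ℓ γ_{ℓ-1} = 2`. Hence `v` is a nonnegative integer
combination of simple roots iff every `S_m v` is nonnegative and `S_ℓ v` is even.
For `v = λ - 2γ₀` with `λ ≥ 0` of even sum this says exactly `λ_0 ≥ 2` and `λ_0 + λ_1 ≥ 4`.
A dominant `λ` failing this has all entries after the first in `{0, 1}` and `λ_0 ≤ 3`;
`λ_0 = 3` would force `λ = (3, 0, …, 0)`, of odd sum, and parity fixes the number of ones.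
-/

namespace TypeC

open Finset

def simpleRoot (ℓ : ℕ) (i k : Fin ℓ) : ℤ :=
  if (i : ℕ) = ℓ - 1 then (if k = i then 2 else 0)
  else ((if k = i then 1 else 0) + (if (k : ℕ) = (i : ℕ) + 1 then -1 else 0))

def partialSum {ℓ : ℕ} (v : Fin ℓ → ℤ) (m : ℕ) : ℤ :=
  ∑ k ∈ univ.filter (fun k : Fin ℓ => (k : ℕ) < m), v k

variable {ℓ : ℕ}

@[simp]
lemma partialSum_zero (v : Fin ℓ → ℤ) : partialSum v 0 = 0 := by
  simp [partialSum]

lemma partialSum_of_le (v : Fin ℓ → ℤ) {m : ℕ} (hm : ℓ ≤ m) : partialSum v m = ∑ k, v k := by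
  rw [partialSum, filter_true_of_mem fun k _ => by omega]

lemma partialSum_succ (v : Fin ℓ → ℤ) (k : Fin ℓ) :
    partialSum v (k + 1) = partialSum v k + v k := by
  have hinsert : univ.filter (fun j : Fin ℓ => (j : ℕ) < k + 1) =
      insert k (univ.filter fun j : Fin ℓ => (j : ℕ) < k) := by
    ext j
    simp only [mem_filter, mem_univ, true_and, mem_insert, Fin.ext_iff]
    omega
  rw [partialSum, partialSum, hinsert, sum_insert (by simp), add_comm]

lemma partialSum_le_partialSum (v : Fin ℓ → ℤ) {m₁ m₂ : ℕ} (hm : m₁ ≤ m₂)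
    (hv : ∀ k : Fin ℓ, m₁ ≤ k → 0 ≤ v k) : partialSum v m₁ ≤ partialSum v m₂ := by
  refine sum_le_sum_of_subset_of_nonneg (monotone_filter_right _ fun k hk => by omega)
    fun k _ hk => hv k ?_
  simpa using hk

lemma eq_of_partialSum_eq {v w : Fin ℓ → ℤ} (h : ∀ m ≤ ℓ, partialSum v m = partialSum w m) :
    v = w := by
  funext k
  have := h (k + 1) k.isLt
  have := h k k.isLt.le
  linarith [partialSum_succ v k, partialSum_succ w k]

lemma partialSum_sum_mul (c : Fin ℓ → ℤ) (w : Fin ℓ → Fin ℓ → ℤ) (m : ℕ) :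
    partialSum (fun k => ∑ i, c i * w i k) m = ∑ i, c i * partialSum (w i) m := by
  simp only [partialSum, mul_sum]
  exact sum_comm

lemma partialSum_simpleRoot (i : Fin ℓ) {m : ℕ} (hm : m ≤ ℓ) :
    partialSum (simpleRoot ℓ i) m =
      if (i : ℕ) + 1 = m then (if (i : ℕ) = ℓ - 1 then 2 else 1) else 0 := by
  induction m with
  | zero => simp
  | succ m ih =>
    rw [partialSum_succ (simpleRoot ℓ i) ⟨m, hm⟩, ih (by omega), simpleRoot]
    simp only [Fin.ext_iff]
    split_ifs <;> omega

lemma partialSum_simpleRoot_nonneg (i : Fin ℓ) {m : ℕ} (hm : m ≤ ℓ) :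
    0 ≤ partialSum (simpleRoot ℓ i) m := by
  rw [partialSum_simpleRoot i hm]
  split_ifs <;> norm_num

lemma even_sum_simpleRoot (i : Fin ℓ) : Even (∑ k, simpleRoot ℓ i k) := by
  rw [← partialSum_of_le _ le_rfl, partialSum_simpleRoot i le_rfl]
  split_ifs <;> first | omega | decide

theorem exists_nat_sum_simpleRoot_iff (v : Fin ℓ → ℤ) :
    (∃ c : Fin ℓ → ℕ, ∀ k, v k = ∑ i, (c i : ℤ) * simpleRoot ℓ i k) ↔
      (∀ m ≤ ℓ, 0 ≤ partialSum v m) ∧ Even (∑ k, v k) := by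
  constructor
  · rintro ⟨c, hc⟩
    obtain rfl : v = fun k => ∑ i, (c i : ℤ) * simpleRoot ℓ i k := funext hc
    refine ⟨fun m hm => ?_, ?_⟩
    · rw [partialSum_sum_mul]
      exact sum_nonneg fun i _ => mul_nonneg (by positivity) (partialSum_simpleRoot_nonneg i hm)
    · rw [sum_comm]
      exact even_sum _ fun i _ => by rw [← mul_sum]; exact (even_sum_simpleRoot i).mul_left _
  · rintro ⟨hnonneg, heven⟩
    have hdvd : 2 ∣ partialSum v ℓ := even_iff_two_dvd.mp (partialSum_of_le v le_rfl ▸ heven)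
    refine ⟨fun i => (if (i : ℕ) = ℓ - 1 then partialSum v ℓ / 2 else partialSum v (i + 1)).toNat,
      congrFun (eq_of_partialSum_eq fun m hm => ?_)⟩
    rw [partialSum_sum_mul]
    rcases Nat.eq_zero_or_pos m with rfl | hm₀
    · simp
    rw [sum_eq_single_of_mem ⟨m - 1, by omega⟩ (mem_univ _) fun i _ hi => ?_,
      partialSum_simpleRoot _ hm]
    · simp only [Nat.sub_add_cancel hm₀, if_true]
      split_ifs with hmℓ
      · obtain rfl : ℓ = m := by omega
        rw [Int.toNat_of_nonneg (Int.ediv_nonneg (hnonneg ℓ le_rfl) zero_le_two),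
          Int.ediv_mul_cancel hdvd]
      · rw [Int.toNat_of_nonneg (hnonneg m hm), mul_one]
    · rw [partialSum_simpleRoot _ hm, if_neg fun h => hi (Fin.ext (by simp only; omega)),
        mul_zero]

lemma forall_partialSum_nonneg_iff (hℓ : 2 ≤ ℓ) (v : Fin ℓ → ℤ)
    (hv : ∀ k : Fin ℓ, 2 ≤ (k : ℕ) → 0 ≤ v k) :
    (∀ m ≤ ℓ, 0 ≤ partialSum v m) ↔
      0 ≤ v ⟨0, by omega⟩ ∧ 0 ≤ v ⟨0, by omega⟩ + v ⟨1, by omega⟩ := by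
  have h₁ : partialSum v 1 = v ⟨0, by omega⟩ := by
    simpa using partialSum_succ v ⟨0, by omega⟩
  have h₂ : partialSum v 2 = v ⟨0, by omega⟩ + v ⟨1, by omega⟩ := by
    simpa [h₁] using partialSum_succ v ⟨1, by omega⟩
  refine ⟨fun h => ⟨h₁ ▸ h 1 (by omega), h₂ ▸ h 2 hℓ⟩, fun ⟨h0, h01⟩ m _ => ?_⟩
  match m with
  | 0 => simp
  | 1 => rwa [h₁]
  | m + 2 => exact (h₂ ▸ h01).trans (partialSum_le_partialSum v (by omega) hv)

theorem two_highestShortRoot_le_iff (hℓ : 2 ≤ ℓ) (lam : Fin ℓ → ℤ) (hpos : ∀ k, 0 ≤ lam k)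
    (heven : Even (∑ k, lam k)) :
    (∃ c : Fin ℓ → ℕ, ∀ k : Fin ℓ, lam k - (if (k : ℕ) = 0 ∨ (k : ℕ) = 1 then 2 else 0) =
        ∑ i, (c i : ℤ) * simpleRoot ℓ i k) ↔
      2 ≤ lam ⟨0, by omega⟩ ∧ 4 ≤ lam ⟨0, by omega⟩ + lam ⟨1, by omega⟩ := by
  have hsum : Even (∑ k : Fin ℓ, (if (k : ℕ) = 0 ∨ (k : ℕ) = 1 then (2 : ℤ) else 0)) :=
    even_sum _ fun k _ => by split_ifs <;> decide
  rw [exists_nat_sum_simpleRoot_iff, forall_partialSum_nonneg_iff hℓ, sum_sub_distrib,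
    eq_true (Int.even_sub.mpr (iff_of_true heven hsum))]
  · simp only [zero_ne_one, one_ne_zero, or_false, or_true, ↓reduceIte, and_true]
    omega
  · intro k hk
    simpa [show (k : ℕ) ≠ 0 by omega, show (k : ℕ) ≠ 1 by omega] using hpos k

lemma exists_forall_iff_val_lt_of_antitone {p : Fin ℓ → Prop} (hp : Antitone p) :
    ∃ t ≤ ℓ, ∀ k : Fin ℓ, p k ↔ (k : ℕ) < t := by
  classical
  refine ⟨#{k | p k}, card_le_univ _ |>.trans_eq (Fintype.card_fin ℓ),
    fun k => ⟨fun hk => ?_, fun hk => ?_⟩⟩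
  · have := card_le_card fun j (hj : j ∈ Iic k) =>
      mem_filter.mpr ⟨mem_univ j, hp (mem_Iic.mp hj) hk⟩
    rw [Fin.card_Iic] at this
    omega
  · by_contra hk'
    have := card_le_card fun j (hj : j ∈ ({k | p k} : Finset (Fin ℓ))) =>
      mem_Iio.mpr (lt_of_not_ge fun hkj => hk' (hp hkj (mem_filter.mp hj).2))
    rw [Fin.card_Iio] at this
    omega

lemma sum_ite_val_lt {t : ℕ} (ht : t ≤ ℓ) :
    ∑ k : Fin ℓ, (if (k : ℕ) < t then (1 : ℤ) else 0) = t := by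
  rw [sum_boole, Fin.card_filter_val_lt, min_eq_right ht]

theorem lt_two_or_add_lt_four_iff (hℓ : 2 ≤ ℓ) (lam : Fin ℓ → ℤ) (hdom : Antitone lam)
    (hpos : ∀ k, 0 ≤ lam k) (heven : Even (∑ k, lam k)) :
    (lam ⟨0, by omega⟩ < 2 ∨ lam ⟨0, by omega⟩ + lam ⟨1, by omega⟩ < 4) ↔
      ((∃ j : ℕ, 2 * j ≤ ℓ ∧
          ∀ k : Fin ℓ, lam k = if (k : ℕ) < 2 * j then 1 else 0) ∨
        (∃ j : ℕ, 2 * j + 1 ≤ ℓ ∧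
          ∀ k : Fin ℓ, lam k =
            if (k : ℕ) = 0 then 2 else if (k : ℕ) < 2 * j + 1 then 1 else 0)) := by
  set k₀ : Fin ℓ := ⟨0, by omega⟩
  set k₁ : Fin ℓ := ⟨1, by omega⟩
  refine ⟨fun hsmall => ?_, ?_⟩
  swap
  · rintro (⟨j, -, hj⟩ | ⟨j, -, hj⟩)
    · left
      rw [hj k₀]
      split_ifs <;> norm_num
    · right
      rw [hj k₀, hj k₁, if_pos rfl, if_neg one_ne_zero]
      split_ifs <;> norm_num
  have hle₀ : ∀ k, lam k ≤ lam k₀ := fun k => hdom (Nat.zero_le k)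
  have hle₁ : ∀ k : Fin ℓ, (k : ℕ) ≠ 0 → lam k ≤ lam k₁ := fun k hk =>
    hdom (show 1 ≤ (k : ℕ) by omega)
  obtain ⟨t, htℓ, ht⟩ := exists_forall_iff_val_lt_of_antitone (p := fun k => 1 ≤ lam k)
    fun i j hij h => h.trans (hdom hij)
  have hind : ∀ k, lam k ≤ 1 → lam k = if (k : ℕ) < t then 1 else 0 := fun k hk => by
    have := ht k
    have := hpos k
    split_ifs <;> omega
  rcases lt_or_ge (lam k₀) 2 with h₀ | h₀
  · have hsum : ∑ k, lam k = t := by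
      rw [sum_congr rfl fun k _ => hind k (by linarith [hle₀ k]), sum_ite_val_lt htℓ]
    obtain ⟨j, rfl⟩ := (Int.even_coe_nat t).mp (hsum ▸ heven)
    exact Or.inl ⟨j, by omega, fun k => by rw [hind k (by linarith [hle₀ k]), two_mul]⟩
  · have h₀₁ : lam k₀ + lam k₁ < 4 := hsmall.resolve_left (by omega)
    have ht₀ : 0 < t := (ht k₀).mp (by omega)
    have hform : ∀ k, lam k =
        (if (k : ℕ) < t then 1 else 0) + if k = k₀ then lam k₀ - 1 else 0 := by
      intro k
      by_cases hk : k = k₀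
      · rw [if_pos (hk ▸ ht₀), if_pos hk, hk]
        ring
      · have hk' : (k : ℕ) ≠ 0 := fun h => hk (Fin.ext h)
        rw [if_neg hk, add_zero, hind k (by linarith [hle₁ k hk', hpos k₁])]
    have hsum : ∑ k, lam k = t + (lam k₀ - 1) := by
      rw [sum_congr rfl fun k _ => hform k, sum_add_distrib, sum_ite_val_lt htℓ, sum_ite_eq']
      simp
    have ht₁ : 1 ≤ lam k₁ ↔ 1 < t := ht k₁
    have hl₀ : lam k₀ = 2 := by
      obtain ⟨r, hr⟩ := hsum ▸ heven
      have := hpos k₁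
      omega
    obtain ⟨j, hj⟩ : ∃ j, t = 2 * j + 1 := by
      obtain ⟨r, hr⟩ := hsum ▸ heven
      exact ⟨r.toNat - 1, by omega⟩
    refine Or.inr ⟨j, by omega, fun k => ?_⟩
    rw [hform k, ← hj]
    by_cases hk : k = k₀
    · rw [if_pos hk, if_pos (congrArg Fin.val hk), if_pos (hk ▸ ht₀), hl₀]
      norm_num
    · rw [if_neg hk, if_neg fun h => hk (Fin.ext h), add_zero]

end TypeC

/-- For the root system of type `C_ℓ` realized in the lattice
`{(a_1,...,a_ℓ) ∈ ℤ^ℓ : Σ a_i even}` with simple roots `γ_i = e_i - e_{i+1}` (`i < ℓ-1`,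
0-indexed) and `γ_{ℓ-1} = 2 e_{ℓ-1}`, the small dominant weights (those `λ` with
`λ ≱ 2γ₀`, for `γ₀ = e_0 + e_1` the highest short root, in the dominance order given by
nonnegative integer combinations of simple roots) are exactly the weights
`(1^{2j} 0^{ℓ-2j})` for `0 ≤ 2j ≤ ℓ` and `(2, 1^{2j}, 0^{ℓ-2j-1})` for `0 ≤ 2j+1 ≤ ℓ`. -/
theorem stmt9 (ℓ : ℕ) (hℓ : 2 ≤ ℓ) (lam : Fin ℓ → ℤ)
    (hdom : ∀ i j : Fin ℓ, i ≤ j → lam j ≤ lam i) (hpos : ∀ i, 0 ≤ lam i)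
    (heven : Even (∑ i, lam i)) :
    (¬ ∃ c : Fin ℓ → ℕ, ∀ k : Fin ℓ,
        lam k - (if (k : ℕ) = 0 ∨ (k : ℕ) = 1 then 2 else 0) =
          ∑ i : Fin ℓ, (c i : ℤ) *
            (if (i : ℕ) = ℓ - 1 then (if k = i then 2 else 0)
              else ((if k = i then 1 else 0) +
                (if (k : ℕ) = (i : ℕ) + 1 then -1 else 0)))) ↔
    ((∃ j : ℕ, 2 * j ≤ ℓ ∧
        ∀ k : Fin ℓ, lam k = if (k : ℕ) < 2 * j then 1 else 0) ∨
      (∃ j : ℕ, 2 * j + 1 ≤ ℓ ∧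
        ∀ k : Fin ℓ, lam k =
          if (k : ℕ) = 0 then 2 else if (k : ℕ) < 2 * j + 1 then 1 else 0)) := by
  refine (not_congr (TypeC.two_highestShortRoot_le_iff hℓ lam hpos heven)).trans ?_
  rw [not_and_or, not_le, not_le]
  exact TypeC.lt_two_or_add_lt_four_iff hℓ lam hdom hpos heven
end

section
/- Let g = \u03a3_{i\u2265N} x_i t^i \u2208 SL_n(\u2102((t))) with x_N \u2260 0, and suppose g \u2208 SL_n(\u2102[[t]]) t^\u03bb SL_n(\u2102[[t]]) where \u03bb = (a_1 \u2265 a_2 \u2265 ... \u2265 a_n), \u03a3 a_i = 0. Then N = a_n, and the rank of x_N equals the number of indices j with a_j = a_n. -/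
/-!
Lift the factors `A`, `B` to matrices `A'`, `B'` over `ℂ⟦t⟧` and let `m = a_n` be the least
exponent. Then `g = t^m · A' · diag(t^(a_j - m)) · B'` with all three factors power-series
matrices, so `g` has no coefficient below `t^m`, and the coefficient of `t^m` is
`A'(0) · diag(δ_{a_j = a_n}) · B'(0)`. Since `det A'(0) = det B'(0) = 1`, its rank is
`#{j | a_j = a_n} > 0`; in particular it is nonzero, which forces `N = m`.
-/

open Matrix

namespace LaurentSeries

variable {R : Type*}

theorem exists_ofPowerSeries_eq [Semiring R] {f : LaurentSeries R}
    (hf : ∀ i < 0, f.coeff i = 0) : ∃ p : PowerSeries R, HahnSeries.ofPowerSeries ℤ R p = f := by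
  refine ⟨PowerSeries.mk fun k => f.coeff k, ?_⟩
  ext i
  rw [PowerSeries.coeff_coe]
  split_ifs with hi
  · exact (hf i hi).symm
  · rw [PowerSeries.coeff_mk, Int.natAbs_of_nonneg (not_lt.mp hi)]

theorem coeff_single_mul_ofPowerSeries [Semiring R] (m i : ℤ) (p : PowerSeries R) :
    (HahnSeries.single m 1 * HahnSeries.ofPowerSeries ℤ R p).coeff i =
      if i < m then 0 else PowerSeries.coeff (i - m).natAbs p := by
  rw [← sub_add_cancel i m, HahnSeries.coeff_single_mul_add, one_mul, PowerSeries.coeff_coe,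
    sub_add_cancel]
  simp only [sub_neg]

end LaurentSeries

namespace Matrix

variable {ι κ R : Type*}

def laurentCoeff [Semiring R] (g : Matrix ι κ (LaurentSeries R)) (i : ℤ) : Matrix ι κ R :=
  of fun k l => (g k l).coeff i

theorem exists_map_ofPowerSeries_eq [Semiring R] {A : Matrix ι κ (LaurentSeries R)}
    (hA : ∀ k l, ∀ i < 0, (A k l).coeff i = 0) :
    ∃ A' : Matrix ι κ (PowerSeries R), A'.map (HahnSeries.ofPowerSeries ℤ R) = A := by
  choose A' hA' using fun k l => LaurentSeries.exists_ofPowerSeries_eq (hA k l)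
  exact ⟨of A', ext hA'⟩

theorem laurentCoeff_single_smul_map_ofPowerSeries_of_lt [Semiring R] {m i : ℤ} (h : i < m)
    (P : Matrix ι κ (PowerSeries R)) :
    laurentCoeff (HahnSeries.single m (1 : R) • P.map (HahnSeries.ofPowerSeries ℤ R)) i = 0 := by
  ext k l
  simp [laurentCoeff, LaurentSeries.coeff_single_mul_ofPowerSeries, h]

theorem laurentCoeff_single_smul_map_ofPowerSeries_self [Semiring R] (m : ℤ)
    (P : Matrix ι κ (PowerSeries R)) :
    laurentCoeff (HahnSeries.single m (1 : R) • P.map (HahnSeries.ofPowerSeries ℤ R)) m =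
      P.map PowerSeries.constantCoeff := by
  ext k l
  simp [laurentCoeff, LaurentSeries.coeff_single_mul_ofPowerSeries]

variable [Fintype ι] [DecidableEq ι]

theorem det_map_constantCoeff_eq_one [CommRing R] {A : Matrix ι ι (PowerSeries R)}
    (h : (A.map (HahnSeries.ofPowerSeries ℤ R)).det = 1) :
    (A.map PowerSeries.constantCoeff).det = 1 := by
  have hA : A.det = 1 := HahnSeries.ofPowerSeries_injective (Γ := ℤ) <| by
    rw [RingHom.map_det, map_one]; exact h
  rw [← RingHom.mapMatrix_apply, ← RingHom.map_det, hA, map_one]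

theorem map_ofPowerSeries_mul_diagonal_mul [CommRing R] (A B : Matrix ι ι (PowerSeries R))
    {lam : ι → ℤ} {m : ℤ} (hm : ∀ j, m ≤ lam j) :
    A.map (HahnSeries.ofPowerSeries ℤ R) * diagonal (fun j => HahnSeries.single (lam j) (1 : R)) *
        B.map (HahnSeries.ofPowerSeries ℤ R) =
      HahnSeries.single m (1 : R) •
        (A * diagonal (fun j => PowerSeries.X ^ (lam j - m).toNat) * B).map
          (HahnSeries.ofPowerSeries ℤ R) := by
  rw [Matrix.map_mul, Matrix.map_mul, diagonal_map (map_zero _), ← Matrix.smul_mul,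
    ← Matrix.mul_smul, ← diagonal_smul]
  congr
  ext j
  rw [Pi.smul_apply, HahnSeries.ofPowerSeries_X_pow, smul_eq_mul, HahnSeries.single_mul_single,
    Int.toNat_of_nonneg (sub_nonneg.mpr (hm j)), add_sub_cancel, one_mul]

theorem rank_mul_diagonal_mul {K : Type*} [Field K] [DecidableEq K] {A B : Matrix ι ι K}
    (hA : IsUnit A.det) (hB : IsUnit B.det) (d : ι → K) :
    (A * diagonal d * B).rank = Fintype.card {i // d i ≠ 0} := by
  rw [rank_mul_eq_left_of_isUnit_det B _ hB, rank_mul_eq_right_of_isUnit_det A _ hA, rank_diagonal]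

end Matrix

/-- Let `g = Σ_{i ≥ N} x_i t^i ∈ SL_n(ℂ((t)))` with `x_N ≠ 0`, and suppose
`g ∈ SL_n(ℂ[[t]]) t^λ SL_n(ℂ[[t]])` where `λ = (a_1 ≥ ... ≥ a_n)`, `Σ a_i = 0`.  Then
`N = a_n`, and the rank of `x_N` equals the number of indices `j` with `a_j = a_n`. -/
theorem stmt10 (n : ℕ) (hn : 0 < n) (N : ℤ)
    (g : Matrix (Fin n) (Fin n) (LaurentSeries ℂ))
    (x : ℤ → Matrix (Fin n) (Fin n) ℂ)
    (hx : ∀ (i : ℤ) (k l : Fin n), x i k l = (g k l).coeff i)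
    (hlow : ∀ i < N, x i = 0) (hN : x N ≠ 0)
    (lam : Fin n → ℤ)
    (hdom : ∀ i j : Fin n, i ≤ j → lam j ≤ lam i)
    (hmem : ∃ A B : Matrix (Fin n) (Fin n) (LaurentSeries ℂ),
      (∀ k l : Fin n, ∀ i < (0 : ℤ), (A k l).coeff i = 0) ∧ A.det = 1 ∧
      (∀ k l : Fin n, ∀ i < (0 : ℤ), (B k l).coeff i = 0) ∧ B.det = 1 ∧
      g = A * Matrix.diagonal (fun j => (HahnSeries.single (lam j) (1 : ℂ))) * B) :
    N = lam ⟨n - 1, by omega⟩ ∧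
      (x N).rank =
        (Finset.univ.filter (fun j : Fin n => lam j = lam ⟨n - 1, by omega⟩)).card := by
  obtain ⟨_, _, hA, hAdet, hB, hBdet, hg⟩ := hmem
  obtain ⟨A, rfl⟩ := exists_map_ofPowerSeries_eq hA
  obtain ⟨B, rfl⟩ := exists_map_ofPowerSeries_eq hB
  set m := lam ⟨n - 1, by omega⟩
  have hm : ∀ j, m ≤ lam j := fun j => hdom j _ (Nat.le_sub_one_of_lt j.isLt)
  rw [map_ofPowerSeries_mul_diagonal_mul A B hm] at hg
  have hxg : ∀ i, x i = laurentCoeff g i := fun i => ext (hx i)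
  have hrank : (x m).rank = (Finset.univ.filter (fun j => lam j = m)).card := by
    rw [hxg, hg, laurentCoeff_single_smul_map_ofPowerSeries_self, Matrix.map_mul, Matrix.map_mul,
      diagonal_map (map_zero _),
      rank_mul_diagonal_mul (det_map_constantCoeff_eq_one hAdet ▸ isUnit_one)
        (det_map_constantCoeff_eq_one hBdet ▸ isUnit_one), Fintype.card_subtype]
    congr 1
    refine Finset.filter_congr fun j _ => ?_
    simp [PowerSeries.constantCoeff_X, (hm j).ge_iff_eq']
  have hxm : x m ≠ 0 := fun h => by
    have : 0 < (Finset.univ.filter (fun j => lam j = m)).card :=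
      Finset.card_pos.mpr ⟨_, Finset.mem_filter.mpr ⟨Finset.mem_univ _, rfl⟩⟩
    rw [← hrank, h, rank_zero] at this
    exact this.false
  have hNm : N = m := le_antisymm (not_lt.mp fun h => hxm (hlow m h))
    (not_lt.mp fun h => hN (by rw [hxg, hg, laurentCoeff_single_smul_map_ofPowerSeries_of_lt h]))
  exact ⟨hNm, hNm ▸ hrank⟩
end

section
/- Let J be a nondegenerate symplectic form matrix on \u2102^{2\u2113} and suppose x, y \u2208 Mat_{2\u2113}(\u2102) satisfy: x \u2208 \ud835\udd2d, the (-1)-eigenspace of \u03c3(A) = -J A^T J^{-1}, rank y = 1, y^2 = (1/2 x^2 - y)y = 0, and the identities x^2 = y + y', xy = y'x, xy' = yx, yy' = y'y = 0 hold where y' = J y^T J^{-1}, with the images of y and y' distinct lines. If additionally u := x restricted to U = im(y) + im(y') has matrix [[0,a],[b,0]] in a basis from the two lines, then ab = 0; consequently x^4 = 0. -/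
open Matrix

set_option maxHeartbeats 1000000 in
/-- Let `J` be a nondegenerate symplectic form matrix on `ℂ^{2ℓ}` and
`x, y ∈ Mat_{2ℓ}(ℂ)` with `x` self-adjoint with respect to `J` (i.e. `x` in the
`(-1)`-eigenspace `𝔭` of `σ(A) = -J Aᵀ J⁻¹`), `rank y = 1`, and with `y'` the adjoint of
`y` satisfying `x² = y + y'`, `xy = y'x`, `xy' = yx`, `yy' = y'y = 0`, the images of `y`
and `y'` being distinct lines `ℂv ≠ ℂv'`.  If moreover `x` restricted to
`U = im y + im y'` has matrix `[[0,a],[b,0]]` in the basis from the two lines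
(`x v = b v'`, `x v' = a v`), then `ab = 0`; consequently `x⁴ = 0`. -/
theorem stmt12 (ℓ : ℕ) (J x y y' : Matrix (Fin (2*ℓ)) (Fin (2*ℓ)) ℂ)
    (hJskew : Jᵀ = -J) (hJ : IsUnit J)
    (hx : xᵀ * J = J * x)
    (hadj : yᵀ * J = J * y')
    (hrk : y.rank = 1)
    (h1 : x ^ 2 = y + y') (h2 : x * y = y' * x) (h3 : x * y' = y * x)
    (h4 : y * y' = 0) (h5 : y' * y = 0)
    (v v' : Fin (2*ℓ) → ℂ)
    (hv : LinearMap.range y.mulVecLin = Submodule.span ℂ {v})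
    (hv' : LinearMap.range y'.mulVecLin = Submodule.span ℂ {v'})
    (hne : Submodule.span ℂ ({v} : Set (Fin (2*ℓ) → ℂ)) ≠ Submodule.span ℂ {v'})
    (a b : ℂ) (hxv : x.mulVec v = b • v') (hxv' : x.mulVec v' = a • v) :
    a * b = 0 ∧ x ^ 4 = 0 := by
  classical
  -- a matrix is zero if it kills every vector
  have hmat0 : ∀ A : Matrix (Fin (2*ℓ)) (Fin (2*ℓ)) ℂ,
      (∀ z, A *ᵥ z = 0) → A = 0 := by
    intro A hA
    ext i j
    have := congrFun (hA (Pi.single j 1)) i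
    simpa [Matrix.mulVec_single] using this
  -- the bilinear form
  set Bf : (Fin (2*ℓ) → ℂ) → (Fin (2*ℓ) → ℂ) → ℂ := fun u z => u ⬝ᵥ (J *ᵥ z) with hBf
  -- moving a J-self-adjoint/adjoint matrix across the form
  have hmove : ∀ (A A' : Matrix (Fin (2*ℓ)) (Fin (2*ℓ)) ℂ), Aᵀ * J = J * A' →
      ∀ u z, Bf (A *ᵥ u) z = Bf u (A' *ᵥ z) := by
    intro A A' hAA' u z
    calc (A *ᵥ u) ⬝ᵥ (J *ᵥ z) = (u ᵥ* Aᵀ) ⬝ᵥ (J *ᵥ z) := by rw [Matrix.vecMul_transpose]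
    _ = u ⬝ᵥ (Aᵀ *ᵥ (J *ᵥ z)) := by
        rw [Matrix.dotProduct_mulVec u Aᵀ (J *ᵥ z)]
    _ = u ⬝ᵥ ((Aᵀ * J) *ᵥ z) := by rw [Matrix.mulVec_mulVec]
    _ = u ⬝ᵥ ((J * A') *ᵥ z) := by rw [hAA']
    _ = u ⬝ᵥ (J *ᵥ (A' *ᵥ z)) := by rw [Matrix.mulVec_mulVec]
  have hBx : ∀ u z, Bf (x *ᵥ u) z = Bf u (x *ᵥ z) := hmove x x hx
  have hBy : ∀ u z, Bf (y *ᵥ u) z = Bf u (y' *ᵥ z) := hmove y y' hadj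
  -- skew-symmetry
  have hskew : ∀ u z, Bf z u = -Bf u z := by
    intro u z
    calc z ⬝ᵥ (J *ᵥ u) = (z ᵥ* J) ⬝ᵥ u := by rw [Matrix.dotProduct_mulVec]
    _ = (z ᵥ* Jᵀᵀ) ⬝ᵥ u := by rw [Matrix.transpose_transpose]
    _ = (Jᵀ *ᵥ z) ⬝ᵥ u := by rw [Matrix.vecMul_transpose]
    _ = (-(J *ᵥ z)) ⬝ᵥ u := by rw [hJskew, Matrix.neg_mulVec]
    _ = -(u ⬝ᵥ (J *ᵥ z)) := by rw [neg_dotProduct, dotProduct_comm]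
  -- nondegeneracy
  have hnd : ∀ w, (∀ z, Bf w z = 0) → w = 0 := by
    intro w hw
    have hwJ : w ᵥ* J = 0 := by
      funext i
      have := hw (Pi.single i 1)
      rw [hBf] at this
      simp [Matrix.dotProduct_mulVec, dotProduct_single] at this
      exact this
    have hinj := Matrix.vecMul_injective_iff_isUnit.mpr hJ
    apply hinj
    show w ᵥ* J = 0 ᵥ* J
    rw [hwJ, Matrix.zero_vecMul]
  -- bilinearity facts
  have hBsmulL : ∀ (c : ℂ) u z, Bf (c • u) z = c * Bf u z := by
    intro c u z; simp [hBf, smul_dotProduct, smul_eq_mul]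
  have hBsmulR : ∀ (c : ℂ) u z, Bf u (c • z) = c * Bf u z := by
    intro c u z; simp [hBf, Matrix.mulVec_smul, dotProduct_smul, smul_eq_mul]
  have hBaddR : ∀ u z w, Bf u (z + w) = Bf u z + Bf u w := by
    intro u z w; simp [hBf, Matrix.mulVec_add, dotProduct_add]
  -- v is nonzero
  have hvne : v ≠ 0 := by
    intro h
    have hr : y.rank = Module.finrank ℂ (LinearMap.range y.mulVecLin) := rfl
    rw [hr, hv, h, Submodule.span_zero_singleton] at hrk
    simp at hrk
  -- v' is nonzero
  have hv'ne : v' ≠ 0 := by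
    intro h
    have hy'0 : y' = 0 := by
      apply hmat0
      intro z
      have : y'.mulVecLin z ∈ LinearMap.range y'.mulVecLin := LinearMap.mem_range_self _ z
      rw [hv', h, Submodule.span_zero_singleton] at this
      simpa [Matrix.mulVecLin_apply] using this
    have hyT : yᵀ = 0 := by
      have h0 : yᵀ * J = 0 := by rw [hadj, hy'0, mul_zero]
      have h0' : yᵀ * J = 0 * J := by rw [h0, zero_mul]
      exact hJ.mul_right_cancel h0'
    have hy0 : y = 0 := Matrix.transpose_eq_zero.mp hyT
    rw [hy0, Matrix.rank_zero] at hrk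
    exact absurd hrk (by norm_num)
  -- scalar coefficient functions
  have hφ : ∀ z, ∃ c : ℂ, y *ᵥ z = c • v := by
    intro z
    have : y.mulVecLin z ∈ LinearMap.range y.mulVecLin := LinearMap.mem_range_self _ z
    rw [hv] at this
    obtain ⟨c, hc⟩ := Submodule.mem_span_singleton.mp this
    exact ⟨c, by simpa [Matrix.mulVecLin_apply] using hc.symm⟩
  have hψ : ∀ z, ∃ c : ℂ, y' *ᵥ z = c • v' := by
    intro z
    have : y'.mulVecLin z ∈ LinearMap.range y'.mulVecLin := LinearMap.mem_range_self _ z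
    rw [hv'] at this
    obtain ⟨c, hc⟩ := Submodule.mem_span_singleton.mp this
    exact ⟨c, by simpa [Matrix.mulVecLin_apply] using hc.symm⟩
  -- y' kills v, y kills v'
  have hy'v : y' *ᵥ v = 0 := by
    have hvmem : v ∈ LinearMap.range y.mulVecLin := by
      rw [hv]; exact Submodule.mem_span_singleton_self v
    obtain ⟨u, hu⟩ := hvmem
    rw [Matrix.mulVecLin_apply] at hu
    rw [← hu, Matrix.mulVec_mulVec, h5, Matrix.zero_mulVec]
  have hyv' : y *ᵥ v' = 0 := by
    have hvmem : v' ∈ LinearMap.range y'.mulVecLin := by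
      rw [hv']; exact Submodule.mem_span_singleton_self v'
    obtain ⟨u, hu⟩ := hvmem
    rw [Matrix.mulVecLin_apply] at hu
    rw [← hu, Matrix.mulVec_mulVec, h4, Matrix.zero_mulVec]
  -- x² on v and v'
  have hx2 : ∀ z, (x ^ 2) *ᵥ z = x *ᵥ (x *ᵥ z) := by
    intro z; rw [pow_two, ← Matrix.mulVec_mulVec]
  have hx2v : (x ^ 2) *ᵥ v = (a * b) • v := by
    rw [hx2, hxv, Matrix.mulVec_smul, hxv', smul_smul, mul_comm b a]
  have hx2v' : (x ^ 2) *ᵥ v' = (a * b) • v' := by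
    rw [hx2, hxv', Matrix.mulVec_smul, hxv, smul_smul]
  -- y v = (a b) v ; y' v' = (a b) v'
  have hyv : y *ᵥ v = (a * b) • v := by
    have := hx2v
    rw [h1, Matrix.add_mulVec, hy'v, add_zero] at this
    exact this
  have hy'v' : y' *ᵥ v' = (a * b) • v' := by
    have := hx2v'
    rw [h1, Matrix.add_mulVec, hyv', zero_add] at this
    exact this
  -- the key identity
  have key : ∀ (z : Fin (2*ℓ) → ℂ) (c : ℂ), y *ᵥ z = c • v → b * c * Bf v' z = 0 := by
    intro z c hc
    have hy'xz : y' *ᵥ (x *ᵥ z) = (c * b) • v' := by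
      rw [Matrix.mulVec_mulVec, ← h2, ← Matrix.mulVec_mulVec, hc,
        Matrix.mulVec_smul, hxv, smul_smul]
    have E1 : Bf (y *ᵥ z) (x *ᵥ z) = c * (b * Bf v' z) := by
      rw [hc, hBsmulL]
      congr 1
      rw [← hBx, hxv, hBsmulL]
    have E2 : Bf (y *ᵥ z) (x *ᵥ z) = -(c * (b * Bf v' z)) := by
      rw [hBy, hy'xz, hBsmulR, hskew v' z]
      ring
    have : c * (b * Bf v' z) = -(c * (b * Bf v' z)) := E1 ▸ E2
    have h2' : (2 : ℂ) * (c * (b * Bf v' z)) = 0 := by linear_combination this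
    have := mul_eq_zero.mp h2'
    rcases this with h | h
    · norm_num at h
    · linear_combination h
  -- ab = 0
  have hab : a * b = 0 := by
    by_contra habne
    have hbne : b ≠ 0 := fun h => habne (by rw [h, mul_zero])
    -- Bf v' z = 0 for all z
    have hBv' : ∀ z, Bf v' z = 0 := by
      intro z
      by_contra hBz
      obtain ⟨c, hc⟩ := hφ z
      have hc0 : c = 0 := by
        have := key z c hc
        rcases mul_eq_zero.mp this with h | h
        · rcases mul_eq_zero.mp h with h' | h'
          · exact absurd h' hbne
          · exact h'
        · exact absurd h hBz
      have hyz0 : y *ᵥ z = 0 := by rw [hc, hc0, zero_smul]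
      have hBv'v : Bf v' v = 0 := by
        have hk := key v (a * b) hyv
        rcases mul_eq_zero.mp hk with h | h
        · rcases mul_eq_zero.mp h with h' | h'
          · exact absurd h' hbne
          · exact absurd h' habne
        · exact h
      have hyzv : y *ᵥ (z + v) = (a * b) • v := by
        rw [Matrix.mulVec_add, hyz0, zero_add, hyv]
      have := key (z + v) (a * b) hyzv
      rcases mul_eq_zero.mp this with h | h
      · rcases mul_eq_zero.mp h with h' | h'
        · exact hbne h'
        · exact habne h'
      · rw [hBaddR, hBv'v, add_zero] at h
        exact hBz h
    exact hv'ne (hnd v' hBv')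
  refine ⟨hab, ?_⟩
  -- y² = 0 and y'² = 0
  have hyy : y * y = 0 := by
    apply hmat0
    intro z
    obtain ⟨c, hc⟩ := hφ z
    rw [← Matrix.mulVec_mulVec, hc, Matrix.mulVec_smul, hyv, hab, zero_smul, smul_zero]
  have hy'y' : y' * y' = 0 := by
    apply hmat0
    intro z
    obtain ⟨c, hc⟩ := hψ z
    rw [← Matrix.mulVec_mulVec, hc, Matrix.mulVec_smul, hy'v', hab, zero_smul, smul_zero]
  have : x ^ 4 = x ^ 2 * x ^ 2 := by rw [← pow_add]
  rw [this, h1, add_mul, mul_add, mul_add, hyy, hy'y', h4, h5]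
  simp
end

section
/- Let \u03c3 be the involution on sl_{2\u2113+2}(\u2102) (realized as antisymmetric matrices so_{2\u2113+2} for the identity form) given by \u03c3(x) = w_0 x w_0 where w_0 = diag(-1, 1, ..., 1), and let \ud835\udd2d be the (-1)-eigenspace of \u03c3 inside so_{2\u2113+2}. Then every nonzero nilpotent element of \ud835\udd2d has Jordan partition [3, 1^{2\u2113-1}]. -/
open Matrix

lemma aux_vecMulVec_mulVec {n : Type*} [Fintype n] (w v r : n → ℂ) :
    (vecMulVec w v).mulVec r = (v ⬝ᵥ r) • w := by
  ext i
  simp [mulVec, vecMulVec_apply, dotProduct, Finset.mul_sum, mul_comm, mul_assoc, mul_left_comm]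

lemma aux_vecMulVec_mul {n : Type*} [Fintype n] (w v w' v' : n → ℂ) :
    vecMulVec w v * vecMulVec w' v' = (v ⬝ᵥ w') • vecMulVec w v' := by
  ext i j
  simp [mul_apply, vecMulVec_apply, dotProduct, Finset.sum_mul, Finset.mul_sum]
  congr 1; ext k; ring

/-- Let `σ` be the involution on `so_{2ℓ+2}` (antisymmetric matrices for the
identity form) given by `σ(x) = w₀ x w₀` with `w₀ = diag(-1,1,...,1)`, and let `𝔭` be its
`(-1)`-eigenspace.  Then every nonzero nilpotent element of `𝔭` has Jordan partition
`[3, 1^{2ℓ-1}]` (equivalently, `rank x = 2`, `rank x² = 1` and `x³ = 0`). -/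
theorem stmt13 (ℓ : ℕ) (hℓ : 1 ≤ ℓ)
    (x : Matrix (Fin (2*ℓ+2)) (Fin (2*ℓ+2)) ℂ)
    (hso : xᵀ = -x)
    (hp : Matrix.diagonal (fun i : Fin (2*ℓ+2) => if (i : ℕ) = 0 then (-1 : ℂ) else 1) * x *
          Matrix.diagonal (fun i : Fin (2*ℓ+2) => if (i : ℕ) = 0 then (-1 : ℂ) else 1) = -x)
    (hnil : IsNilpotent x) (hx0 : x ≠ 0) :
    x.rank = 2 ∧ (x ^ 2).rank = 1 ∧ x ^ 3 = 0 := by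
  classical
  haveI : NeZero (2*ℓ+2) := ⟨by omega⟩
  set u : Fin (2*ℓ+2) → ℂ := fun i => x i 0 with hu
  set a : Fin (2*ℓ+2) → ℂ := Pi.single (0 : Fin (2*ℓ+2)) (1 : ℂ) with ha
  -- entrywise consequences of hp
  have hent : ∀ i j : Fin (2*ℓ+2),
      (if (i : ℕ) = 0 then (-1:ℂ) else 1) * x i j * (if (j : ℕ) = 0 then (-1:ℂ) else 1)
        = - x i j := by
    intro i j
    have := congrFun (congrFun hp i) j
    simpa only [Matrix.mul_diagonal, Matrix.diagonal_mul, Matrix.neg_apply] using this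
  have hzero : ∀ i j : Fin (2*ℓ+2), (i : ℕ) ≠ 0 → (j : ℕ) ≠ 0 → x i j = 0 := by
    intro i j hi hj
    have h := hent i j
    rw [if_neg hi, if_neg hj] at h
    have h2 : x i j = - x i j := by simpa using h
    linear_combination h2 / 2
  have hx00 : x 0 0 = 0 := by
    have h := hent 0 0
    simp at h
    first
    | exact h
    | linear_combination h / 2
  have hskew : ∀ i j : Fin (2*ℓ+2), x j i = - x i j := by
    intro i j
    have := congrFun (congrFun hso i) j
    simpa [Matrix.transpose_apply] using this
  -- representation x = u aᵀ - a uᵀ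
  have hrep : x = vecMulVec u a - vecMulVec a u := by
    ext i j
    simp only [Matrix.sub_apply, vecMulVec_apply, ha, Pi.single_apply]
    by_cases hj : j = 0
    · by_cases hi : i = 0
      · subst hi hj; simp [hu, hx00]
      · subst hj
        simp [hi, hu]
    · by_cases hi : i = 0
      · subst hi
        simp only [if_neg hj, if_pos rfl, mul_zero, one_mul, zero_sub]
        rw [hu]
        simp [hskew j 0]
      · have hi' : (i : ℕ) ≠ 0 := fun h => hi (Fin.ext h)
        have hj' : (j : ℕ) ≠ 0 := fun h => hj (Fin.ext h)
        simp [if_neg hi, if_neg hj, hzero i j hi' hj']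
  -- dot products
  have hu0 : u 0 = 0 := hx00
  have haa : a ⬝ᵥ a = 1 := by simp [ha]
  have hau : a ⬝ᵥ u = 0 := by simp [ha, single_dotProduct, hu0]
  have hua : u ⬝ᵥ a = 0 := by simp [ha, dotProduct_single, hu0]
  set s : ℂ := u ⬝ᵥ u with hs
  set A := vecMulVec u a with hA
  set B := vecMulVec a u with hB
  -- powers of x
  have hx2 : x ^ 2 = -(vecMulVec u u) - s • vecMulVec a a := by
    rw [pow_two, hrep]
    rw [sub_mul, mul_sub, mul_sub, hA, hB, aux_vecMulVec_mul, aux_vecMulVec_mul,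
      aux_vecMulVec_mul, aux_vecMulVec_mul, haa, hau, hua, ← hs]
    simp only [zero_smul, one_smul]
    abel
  have hx3 : x ^ 3 = (-s) • x := by
    rw [pow_succ, hx2, hrep, hA, hB]
    rw [sub_mul, mul_sub, mul_sub, neg_mul, neg_mul, smul_mul_assoc, smul_mul_assoc,
      aux_vecMulVec_mul, aux_vecMulVec_mul, aux_vecMulVec_mul, aux_vecMulVec_mul,
      haa, hau, hua, ← hs]
    simp only [zero_smul, one_smul, smul_zero, smul_sub, neg_smul]
    abel
  -- s must vanish
  have hodd : ∀ k : ℕ, x ^ (2*k+3) = ((-s)^(k+1)) • x := by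
    intro k
    induction k with
    | zero => simpa using hx3
    | succ k ih =>
      have h1 : 2*(k+1)+3 = (2*k+3)+2 := by ring
      rw [h1, pow_add, ih, smul_mul_assoc, ← pow_succ', hx3, smul_smul, ← pow_succ]
  have hs0 : s = 0 := by
    by_contra hsne
    obtain ⟨m, hm⟩ := hnil
    have hz : x ^ (2*m+3) = 0 := by
      have h1 : 2*m+3 = m+(m+3) := by ring
      rw [h1, pow_add, hm, zero_mul]
    rw [hodd m] at hz
    rcases smul_eq_zero.mp hz with h | h
    · have h' : (-s) = 0 := pow_eq_zero_iff (Nat.succ_ne_zero m) |>.mp h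
      exact hsne (neg_eq_zero.mp h')
    · exact hx0 h
  have hx3' : x ^ 3 = 0 := by rw [hx3, hs0]; simp
  have hx2' : x ^ 2 = -(vecMulVec u u) := by rw [hx2, hs0]; simp
  -- u ≠ 0
  have hune : u ≠ 0 := by
    intro h
    apply hx0
    rw [hrep, hA, hB, h]
    ext i j
    simp [vecMulVec_apply]
  obtain ⟨j, hj⟩ : ∃ j, u j ≠ 0 := Function.ne_iff.mp hune
  set v₀ : Fin (2*ℓ+2) → ℂ := Pi.single j (-(u j)⁻¹) with hv₀
  have huv₀ : u ⬝ᵥ v₀ = -1 := by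
    rw [hv₀, dotProduct_single]
    field_simp
  -- mulVec formulas
  have hmv : ∀ v, x.mulVec v = (a ⬝ᵥ v) • u - (u ⬝ᵥ v) • a := by
    intro v
    rw [hrep, Matrix.sub_mulVec, aux_vecMulVec_mulVec, aux_vecMulVec_mulVec]
  have hmv2 : ∀ v, (x ^ 2).mulVec v = -((u ⬝ᵥ v) • u) := by
    intro v
    rw [hx2', Matrix.neg_mulVec, aux_vecMulVec_mulVec]
  -- rank of x²
  have hr2 : LinearMap.range (x ^ 2).mulVecLin = Submodule.span ℂ {u} := by
    apply le_antisymm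
    · rintro y ⟨v, rfl⟩
      rw [Matrix.mulVecLin_apply, hmv2]
      exact Submodule.neg_mem _ (Submodule.smul_mem _ _ (Submodule.mem_span_singleton_self _))
    · rw [Submodule.span_le, Set.singleton_subset_iff]
      refine ⟨v₀, ?_⟩
      rw [Matrix.mulVecLin_apply, hmv2, huv₀]
      simp
  have hrank2 : (x ^ 2).rank = 1 := by
    rw [Matrix.rank, hr2, finrank_span_singleton hune]
  -- rank of x
  have hr1 : LinearMap.range x.mulVecLin = Submodule.span ℂ {u, a} := by
    apply le_antisymm
    · rintro y ⟨v, rfl⟩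
      rw [Matrix.mulVecLin_apply, hmv]
      refine Submodule.sub_mem _ ?_ ?_
      · exact Submodule.smul_mem _ _ (Submodule.subset_span (by simp))
      · exact Submodule.smul_mem _ _ (Submodule.subset_span (by simp))
    · rw [Submodule.span_le]
      rintro y (rfl | rfl)
      · exact ⟨a, by rw [Matrix.mulVecLin_apply, hmv, haa, hua]; simp⟩
      · refine ⟨v₀ - (a ⬝ᵥ v₀) • a, ?_⟩
        rw [Matrix.mulVecLin_apply, hmv]
        rw [dotProduct_sub, dotProduct_sub, dotProduct_smul, dotProduct_smul,
          haa, hua, huv₀]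
        simp
  have hli : LinearIndependent ℂ ![u, a] := by
    rw [LinearIndependent.pair_iff]
    intro c t hct
    have h0 : c * u 0 + t * a 0 = 0 := congrFun hct 0
    rw [hu0, ha] at h0
    simp at h0
    subst h0
    have : c • u = 0 := by simpa using hct
    rcases smul_eq_zero.mp this with h | h
    · exact ⟨h, rfl⟩
    · exact absurd h hune
  have hrange : Set.range ![u, a] = {u, a} := by
    ext y
    simp [Fin.exists_fin_two, eq_comm, or_comm]
  have hrank1 : x.rank = 2 := by
    rw [Matrix.rank, hr1, show ({u, a} : Set (Fin (2*ℓ+2) → ℂ)) = Set.range ![u, a] from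
      hrange.symm, finrank_span_eq_card hli, Fintype.card_fin]
  exact ⟨hrank1, hrank2, hx3'⟩
end

section
/- With \ud835\udd2d the (-1)-eigenspace of \u03c3(x) = w_0 x w_0 in so_{2\u2113+2} (w_0 = diag(-1,1,...,1)), the group K = SO_{2\u2113+1} (embedded as block-diagonal diag(1, g)) acting on \ud835\udd2d by conjugation has exactly two nilpotent orbits: {0} and the set of all nonzero nilpotent elements of \ud835\udd2d. -/
open Matrix Complex

/-- Membership in the `(-1)`-eigenspace `𝔭` of `σ(x) = w₀ x w₀` in `so_{2ℓ+2}`, where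
`w₀ = diag(-1, 1, ..., 1)` (written in block form over `Fin 1 ⊕ Fin (2ℓ+1)`). -/
def memP (ℓ : ℕ) (x : Matrix (Fin 1 ⊕ Fin (2*ℓ+1)) (Fin 1 ⊕ Fin (2*ℓ+1)) ℂ) : Prop :=
  xᵀ = -x ∧
    Matrix.fromBlocks (-1 : Matrix (Fin 1) (Fin 1) ℂ) 0 0
        (1 : Matrix (Fin (2*ℓ+1)) (Fin (2*ℓ+1)) ℂ) * x *
      Matrix.fromBlocks (-1 : Matrix (Fin 1) (Fin 1) ℂ) 0 0
        (1 : Matrix (Fin (2*ℓ+1)) (Fin (2*ℓ+1)) ℂ) = -x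

variable {n : ℕ}

lemma vmv_mul_vmv (v u w z : Fin n → ℂ) :
    vecMulVec v u * vecMulVec w z = (u ⬝ᵥ w) • vecMulVec v z := by
  ext i j
  simp [vecMulVec_apply, mul_apply, dotProduct, Finset.sum_mul, Finset.mul_sum]
  ring_nf
  congr 1; ext k; ring

lemma vmv_mulVec (v w u : Fin n → ℂ) : vecMulVec v w *ᵥ u = (w ⬝ᵥ u) • v := by
  ext i
  simp [vecMulVec_apply, mulVec, dotProduct, Finset.sum_mul, Finset.mul_sum]
  congr 1; ext k; ring

noncomputable def reflM (v : Fin n → ℂ) : Matrix (Fin n) (Fin n) ℂ :=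
  1 - (2 / (v ⬝ᵥ v)) • vecMulVec v v

lemma refl_transpose (v : Fin n → ℂ) : (reflM v)ᵀ = reflM v := by
  unfold reflM
  rw [transpose_sub, transpose_smul, transpose_one]
  congr 1
  ext i j
  simp [vecMulVec_apply, mul_comm]

lemma refl_mul_self (v : Fin n → ℂ) (hv : v ⬝ᵥ v ≠ 0) : reflM v * reflM v = 1 := by
  unfold reflM
  simp only [sub_mul, mul_sub, one_mul, mul_one, smul_mul_assoc, mul_smul_comm,
    vmv_mul_vmv, smul_smul, smul_sub]
  have : 2 / (v ⬝ᵥ v) * (2 / (v ⬝ᵥ v) * (v ⬝ᵥ v)) = 2 / (v ⬝ᵥ v) + 2 / (v ⬝ᵥ v) := by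
    field_simp; ring
  rw [this]
  module

lemma refl_mulVec (v u : Fin n → ℂ) : reflM v *ᵥ u = u - (2 * (v ⬝ᵥ u) / (v ⬝ᵥ v)) • v := by
  unfold reflM
  rw [sub_mulVec, one_mulVec, smul_mulVec, vmv_mulVec, smul_smul]
  congr 2
  ring

lemma refl_map (u w : Fin n → ℂ) (h : u ⬝ᵥ u = w ⬝ᵥ w) (hv : (u - w) ⬝ᵥ (u - w) ≠ 0) :
    reflM (u - w) *ᵥ u = w := by
  rw [refl_mulVec]
  have h1 : (u - w) ⬝ᵥ (u - w) = 2 * ((u - w) ⬝ᵥ u) := by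
    simp [sub_dotProduct, dotProduct_sub, h, dotProduct_comm u w]
    ring
  rw [h1]
  have h2 : (2 : ℂ) * ((u - w) ⬝ᵥ u) ≠ 0 := h1 ▸ hv
  have h3 : (u - w) ⬝ᵥ u ≠ 0 := by
    intro h; rw [h, mul_zero] at h2; exact h2 rfl
  have : 2 * ((u - w) ⬝ᵥ u / (2 * (u - w) ⬝ᵥ u)) = 1 := by
    rw [← mul_div_assoc, div_self h2]
  rw [mul_div_assoc, this, one_smul]
  abel

-- block matrix from a vector
def Xu (u : Fin n → ℂ) : Matrix (Fin 1 ⊕ Fin n) (Fin 1 ⊕ Fin n) ℂ :=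
  fromBlocks 0 (-Matrix.of fun (_ : Fin 1) j => u j) (Matrix.of fun i (_ : Fin 1) => u i) 0

lemma Xu_mul_Xu (u v : Fin n → ℂ) :
    Xu u * Xu v = fromBlocks (Matrix.of fun _ _ => -(u ⬝ᵥ v)) 0 0 (-(vecMulVec u v)) := by
  unfold Xu
  rw [fromBlocks_multiply]
  ext (i|i) (j|j) <;>
    simp [fromBlocks, mul_apply, vecMulVec_apply, dotProduct]

lemma Xu_cube (u : Fin n → ℂ) : Xu u * Xu u * Xu u = -((u ⬝ᵥ u) • Xu u) := by
  rw [Xu_mul_Xu]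
  unfold Xu
  rw [fromBlocks_multiply]
  ext (i|i) (j|j) <;>
    simp [fromBlocks, mul_apply, vecMulVec_apply, dotProduct, Finset.sum_mul, Finset.mul_sum] <;>
    ring_nf <;> try (congr 1; ext k; ring)

lemma memP_Xu (ℓ : ℕ) (u : Fin (2*ℓ+1) → ℂ) : memP ℓ (Xu u) := by
  constructor
  · unfold Xu
    rw [fromBlocks_transpose]
    ext (i|i) (j|j) <;> simp [fromBlocks]
  · unfold Xu
    rw [fromBlocks_multiply, fromBlocks_multiply]
    ext (i|i) (j|j) <;> simp [fromBlocks]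

lemma Xu_zero : Xu (0 : Fin n → ℂ) = 0 := by
  ext (i|i) (j|j) <;> simp [Xu, fromBlocks]

lemma Xu_ne_zero {u : Fin n → ℂ} (hu : u ≠ 0) : Xu u ≠ 0 := by
  intro h
  apply hu
  ext i
  have := congrFun (congrFun h (Sum.inr i)) (Sum.inl 0)
  simpa [Xu, fromBlocks] using this

lemma memP_extract {ℓ : ℕ} {x : Matrix (Fin 1 ⊕ Fin (2*ℓ+1)) (Fin 1 ⊕ Fin (2*ℓ+1)) ℂ}
    (h : memP ℓ x) : x = Xu (fun i => x (Sum.inr i) (Sum.inl 0)) := by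
  obtain ⟨h1, h2⟩ := h
  have hW : (fromBlocks (-1 : Matrix (Fin 1) (Fin 1) ℂ) 0 0
      (1 : Matrix (Fin (2*ℓ+1)) (Fin (2*ℓ+1)) ℂ)) =
      diagonal (Sum.elim (fun _ => (-1 : ℂ)) fun _ => 1) := by
    rw [← fromBlocks_diagonal]
    ext (i|i) (j|j) <;> simp [fromBlocks, diagonal_apply, one_apply] <;> split <;> simp_all
  rw [hW] at h2
  have key : ∀ i j, (Sum.elim (fun _ => (-1:ℂ)) (fun _ => 1) i) * x i j *
      (Sum.elim (fun _ => (-1:ℂ)) (fun _ => 1) j) = -x i j := by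
    intro i j
    have := congrFun (congrFun h2 i) j
    rwa [mul_diagonal, diagonal_mul] at this
  have ht : ∀ i j, xᵀ i j = -x i j := fun i j => congrFun (congrFun h1 i) j
  ext (i|i) (j|j)
  · have := key (Sum.inl i) (Sum.inl j)
    simp at this
    have hx : x (Sum.inl i) (Sum.inl j) = 0 := by linear_combination this / 2
    simp [Xu, fromBlocks, hx]
  · have := ht (Sum.inr j) (Sum.inl i)
    rw [transpose_apply] at this
    have hi : i = 0 := Subsingleton.elim _ _
    subst hi
    simp [Xu, fromBlocks, this]
  · have hj : j = 0 := Subsingleton.elim _ _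
    subst hj
    simp [Xu, fromBlocks]
  · have := key (Sum.inr i) (Sum.inr j)
    simp at this
    have hx : x (Sum.inr i) (Sum.inr j) = 0 := by linear_combination this / 2
    simp [Xu, fromBlocks, hx]

lemma Xu_pow_odd (u : Fin n → ℂ) (m : ℕ) :
    Xu u ^ (2*m+1) = (-(u ⬝ᵥ u))^m • Xu u := by
  induction m with
  | zero => simp
  | succ m ih =>
    have : 2*(m+1)+1 = (2*m+1) + 2 := by ring
    rw [this, pow_add, ih, pow_two, smul_mul_assoc, ← mul_assoc, Xu_cube]
    rw [pow_succ, ← neg_smul, smul_smul]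

lemma isotropic_of_nilpotent {u : Fin n → ℂ} (hu : u ≠ 0) (h : IsNilpotent (Xu u)) :
    u ⬝ᵥ u = 0 := by
  obtain ⟨N, hN⟩ := h
  have h1 : Xu u ^ (2*N+1) = 0 := by
    have : 2*N+1 = N + (N+1) := by ring
    rw [this, pow_add, hN, zero_mul]
  rw [Xu_pow_odd] at h1
  rcases smul_eq_zero.mp h1 with h2 | h2
  · exact neg_eq_zero.mp (pow_eq_zero_iff'.mp h2).1
  · exact absurd h2 (Xu_ne_zero hu)

noncomputable def u0 (n : ℕ) : Fin n → ℂ := fun i =>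
  if (i : ℕ) = 0 then 1 else if (i : ℕ) = 1 then I else 0

lemma u0_eq (h3 : 3 ≤ n) :
    u0 n = Pi.single (⟨0, by omega⟩ : Fin n) 1 + Pi.single (⟨1, by omega⟩ : Fin n) I := by
  ext i
  simp only [u0, Pi.add_apply, Pi.single_apply, Fin.ext_iff]
  split_ifs <;> simp_all <;> omega

lemma dot_u0 (h3 : 3 ≤ n) (v : Fin n → ℂ) :
    v ⬝ᵥ u0 n = v ⟨0, by omega⟩ + v ⟨1, by omega⟩ * I := by
  rw [u0_eq h3, dotProduct_add, dotProduct_single, dotProduct_single, mul_one]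

lemma u0_dot (h3 : 3 ≤ n) (v : Fin n → ℂ) :
    u0 n ⬝ᵥ v = v ⟨0, by omega⟩ + I * v ⟨1, by omega⟩ := by
  rw [u0_eq h3, add_dotProduct, single_dotProduct, single_dotProduct, one_mul]

lemma u0_iso (h3 : 3 ≤ n) : u0 n ⬝ᵥ u0 n = 0 := by
  rw [dot_u0 h3]
  norm_num [u0, I_mul_I]

lemma u0_apply0 (h3 : 3 ≤ n) : u0 n ⟨0, by omega⟩ = 1 := by simp [u0]
lemma u0_apply2 (h3 : 3 ≤ n) : u0 n ⟨2, by omega⟩ = 0 := by simp [u0]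

lemma u0_ne (h3 : 3 ≤ n) : u0 n ≠ 0 := by
  intro h
  have := congrFun h ⟨0, by omega⟩
  simp [u0] at this

lemma exists_v (h3 : 3 ≤ n) {u : Fin n → ℂ} (hu : u ≠ 0) :
    ∃ v : Fin n → ℂ, v ⬝ᵥ u ≠ 0 ∧ v ⬝ᵥ u0 n ≠ 0 := by
  obtain ⟨j, hj⟩ := Function.ne_iff.mp hu
  simp only [Pi.zero_apply] at hj
  set i₀ : Fin n := ⟨0, by omega⟩ with hi₀
  set v₁ : Fin n → ℂ := Pi.single j 1 with hv₁
  set v₂ : Fin n → ℂ := Pi.single i₀ 1 with hv₂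
  have hv₁u : v₁ ⬝ᵥ u = u j := by rw [hv₁, single_dotProduct, one_mul]
  have hv₂u : v₂ ⬝ᵥ u = u i₀ := by rw [hv₂, single_dotProduct, one_mul]
  have hv₂u0 : v₂ ⬝ᵥ u0 n = 1 := by
    rw [hv₂, single_dotProduct, one_mul, u0_apply0 h3]
  set b : ℂ := v₁ ⬝ᵥ u0 n with hb
  have key : ∀ t : ℂ, (v₁ + t • v₂) ⬝ᵥ u = u j + t * u i₀ ∧
      (v₁ + t • v₂) ⬝ᵥ u0 n = b + t := by
    intro t
    constructor
    · rw [add_dotProduct, smul_dotProduct, hv₁u, hv₂u, smul_eq_mul]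
    · rw [add_dotProduct, smul_dotProduct, hv₂u0, ← hb, smul_eq_mul, mul_one]
  by_cases hbz : b ≠ 0
  · exact ⟨v₁ + (0:ℂ) • v₂, by rw [(key 0).1]; simpa using hj, by rw [(key 0).2]; simpa using hbz⟩
  · push_neg at hbz
    by_cases hB : u i₀ = 0
    · exact ⟨v₁ + (1:ℂ) • v₂, by rw [(key 1).1, hB]; simpa using hj,
        by rw [(key 1).2, hbz]; norm_num⟩
    · refine ⟨v₁ + (u j / u i₀) • v₂, ?_, ?_⟩
      · rw [(key _).1, div_mul_cancel₀ _ hB]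
        intro h
        apply hj
        have : (2:ℂ) * u j = 0 := by linear_combination h
        simpa using this
      · rw [(key _).2, hbz, zero_add]
        exact div_ne_zero hj hB

lemma O_trans (h3 : 3 ≤ n) {u : Fin n → ℂ} (hu : u ≠ 0) (hiso : u ⬝ᵥ u = 0) :
    ∃ h : Matrix (Fin n) (Fin n) ℂ, hᵀ * h = 1 ∧ h *ᵥ u = u0 n := by
  by_cases hd : u ⬝ᵥ u0 n ≠ 0
  · refine ⟨reflM (u - u0 n), ?_, ?_⟩
    · have hvv : (u - u0 n) ⬝ᵥ (u - u0 n) ≠ 0 := by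
        rw [sub_dotProduct, dotProduct_sub, dotProduct_sub, hiso, u0_iso h3,
          dotProduct_comm (u0 n) u]
        intro h
        apply hd
        have : (2:ℂ) * (u ⬝ᵥ u0 n) = 0 := by linear_combination -h
        simpa using this
      rw [refl_transpose]
      exact refl_mul_self _ hvv
    · apply refl_map
      · rw [hiso, u0_iso h3]
      · rw [sub_dotProduct, dotProduct_sub, dotProduct_sub, hiso, u0_iso h3,
          dotProduct_comm (u0 n) u]
        intro h
        apply hd
        have : (2:ℂ) * (u ⬝ᵥ u0 n) = 0 := by linear_combination -h
        simpa using this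
  · push_neg at hd
    obtain ⟨v, hvu, hvu0⟩ := exists_v h3 hu
    set a : ℂ := -(v ⬝ᵥ v) / (2 * (v ⬝ᵥ u)) with ha
    set w : Fin n → ℂ := v + a • u with hw
    have hwu : w ⬝ᵥ u = v ⬝ᵥ u := by
      rw [hw, add_dotProduct, smul_dotProduct, hiso, smul_zero, add_zero]
    have huw : u ⬝ᵥ w = v ⬝ᵥ u := by rw [dotProduct_comm, hwu]
    have hwu0 : w ⬝ᵥ u0 n = v ⬝ᵥ u0 n := by
      rw [hw, add_dotProduct, smul_dotProduct, hd, smul_zero, add_zero]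
    have hww : w ⬝ᵥ w = 0 := by
      have expand : w ⬝ᵥ w = v ⬝ᵥ v + 2 * a * (v ⬝ᵥ u) := by
        rw [hw]
        simp only [add_dotProduct, dotProduct_add, smul_dotProduct, dotProduct_smul,
          smul_eq_mul, hiso, dotProduct_comm u v]
        ring
      rw [expand, ha]
      field_simp
      ring
    have h1 : (u - w) ⬝ᵥ (u - w) ≠ 0 := by
      rw [sub_dotProduct, dotProduct_sub, dotProduct_sub, hiso, hww, huw, hwu]
      intro h
      apply hvu
      have : (2:ℂ) * (v ⬝ᵥ u) = 0 := by linear_combination -h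
      simpa using this
    have h2 : (w - u0 n) ⬝ᵥ (w - u0 n) ≠ 0 := by
      rw [sub_dotProduct, dotProduct_sub, dotProduct_sub, hww, u0_iso h3,
        dotProduct_comm (u0 n) w, hwu0]
      intro h
      apply hvu0
      have : (2:ℂ) * (v ⬝ᵥ u0 n) = 0 := by linear_combination -h
      simpa using this
    refine ⟨reflM (w - u0 n) * reflM (u - w), ?_, ?_⟩
    · rw [transpose_mul, refl_transpose, refl_transpose, mul_assoc,
        ← mul_assoc (reflM (w - u0 n)), refl_mul_self _ h2, one_mul, refl_mul_self _ h1]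
    · rw [← mulVec_mulVec, refl_map u w (by rw [hiso, hww]) h1,
        refl_map w (u0 n) (by rw [hww, u0_iso h3]) h2]

lemma SO_trans (h3 : 3 ≤ n) {u u' : Fin n → ℂ} (hu : u ≠ 0) (hiso : u ⬝ᵥ u = 0)
    (hu' : u' ≠ 0) (hiso' : u' ⬝ᵥ u' = 0) :
    ∃ g : Matrix (Fin n) (Fin n) ℂ, gᵀ * g = 1 ∧ g.det = 1 ∧ g *ᵥ u = u' := by
  obtain ⟨h, hh, hhu⟩ := O_trans h3 hu hiso
  obtain ⟨h', hh', hhu'⟩ := O_trans h3 hu' hiso'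
  set i₂ : Fin n := ⟨2, by omega⟩ with hi₂
  set D : Matrix (Fin n) (Fin n) ℂ := diagonal (fun i => if i = i₂ then -1 else 1) with hD
  have hDD : D * D = 1 := by
    rw [hD, diagonal_mul_diagonal]
    have : (fun i => (if i = i₂ then (-1:ℂ) else 1) * (if i = i₂ then -1 else 1))
        = fun _ => (1:ℂ) := by
      funext i; split <;> norm_num
    rw [this, diagonal_one]
  have hDT : Dᵀ = D := diagonal_transpose _
  have hDdet : D.det = -1 := by
    rw [hD, det_diagonal]
    rw [Finset.prod_ite_eq' Finset.univ i₂ (fun _ => (-1:ℂ))]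
    simp
  have hDu0 : D *ᵥ u0 n = u0 n := by
    ext i
    rw [hD, mulVec_diagonal]
    by_cases hi : i = i₂
    · subst hi
      rw [hi₂, u0_apply2 h3]
      simp
    · simp [hi]
  have hback : h'ᵀ *ᵥ u0 n = u' := by
    rw [← hhu', mulVec_mulVec, hh', one_mulVec]
  have hh'2 : h' * h'ᵀ = 1 := mul_eq_one_comm.mp hh'
  have horth : (h'ᵀ * h)ᵀ * (h'ᵀ * h) = 1 := by
    rw [transpose_mul, transpose_transpose, mul_assoc, ← mul_assoc h' h'ᵀ,
      hh'2, one_mul, hh]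
  have hdet2 : ((h'ᵀ * h).det) * ((h'ᵀ * h).det) = 1 := by
    have e := congrArg Matrix.det horth
    rwa [det_mul, det_transpose, det_one] at e
  rcases mul_self_eq_one_iff.mp hdet2 with h1 | h1
  · refine ⟨h'ᵀ * h, ?_, h1, ?_⟩
    · exact horth
    · rw [← mulVec_mulVec, hhu, hback]
  · refine ⟨h'ᵀ * D * h, ?_, ?_, ?_⟩
    · rw [transpose_mul, transpose_mul, transpose_transpose, hDT]
      calc hᵀ * (D * h') * (h'ᵀ * D * h)
          = hᵀ * D * (h' * h'ᵀ) * (D * h) := by noncomm_ring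
        _ = hᵀ * (D * D) * h := by rw [hh'2]; noncomm_ring
        _ = 1 := by rw [hDD, mul_one, hh]
    · rw [det_mul, det_mul, hDdet]
      have e : h'ᵀ.det * h.det = -1 := by rw [← det_mul, h1]
      linear_combination -e
    · rw [← mulVec_mulVec, ← mulVec_mulVec, hhu, hDu0, hback]

lemma conj_eq {g : Matrix (Fin n) (Fin n) ℂ} {u u' : Fin n → ℂ}
    (hg : gᵀ * g = 1) (hgu : g *ᵥ u = u') :
    fromBlocks (1 : Matrix (Fin 1) (Fin 1) ℂ) 0 0 g * Xu u =
      Xu u' * fromBlocks (1 : Matrix (Fin 1) (Fin 1) ℂ) 0 0 g := by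
  have hback : gᵀ *ᵥ u' = u := by rw [← hgu, mulVec_mulVec, hg, one_mulVec]
  unfold Xu
  rw [fromBlocks_multiply, fromBlocks_multiply]
  ext (i|i) (j|j) <;> simp [fromBlocks, mul_apply]
  · -- top-right: -(u j) = -∑ k, u' k * g k j
    have := congrFun hback j
    simp [mulVec, dotProduct, transpose_apply] at this
    rw [← this]
    exact Finset.sum_congr rfl fun k _ => by ring
  · -- bottom-left: ∑ k, g i k * u k = u' i
    have := congrFun hgu i
    simpa [mulVec, dotProduct] using this


/-- With `𝔭` the `(-1)`-eigenspace of `σ(x) = w₀ x w₀` in `so_{2ℓ+2}`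
(`w₀ = diag(-1,1,...,1)`), the group `K = SO_{2ℓ+1}` (embedded block-diagonally as
`diag(1, g)`) acting on `𝔭` by conjugation has exactly two nilpotent orbits: `{0}` and
the set of all nonzero nilpotent elements of `𝔭` (which is nonempty and a single orbit,
and of course does not contain `0`). -/
theorem stmt14 (ℓ : ℕ) (hℓ : 1 ≤ ℓ) :
    (∃ x : Matrix (Fin 1 ⊕ Fin (2*ℓ+1)) (Fin 1 ⊕ Fin (2*ℓ+1)) ℂ,
      memP ℓ x ∧ IsNilpotent x ∧ x ≠ 0) ∧
    (∀ x x' : Matrix (Fin 1 ⊕ Fin (2*ℓ+1)) (Fin 1 ⊕ Fin (2*ℓ+1)) ℂ,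
      memP ℓ x → IsNilpotent x → x ≠ 0 →
      memP ℓ x' → IsNilpotent x' → x' ≠ 0 →
      ∃ g : Matrix (Fin (2*ℓ+1)) (Fin (2*ℓ+1)) ℂ,
        gᵀ * g = 1 ∧ g.det = 1 ∧
        Matrix.fromBlocks (1 : Matrix (Fin 1) (Fin 1) ℂ) 0 0 g * x =
          x' * Matrix.fromBlocks (1 : Matrix (Fin 1) (Fin 1) ℂ) 0 0 g) := by
  have h3 : 3 ≤ 2*ℓ+1 := by omega
  constructor
  · refine ⟨Xu (u0 (2*ℓ+1)), memP_Xu ℓ _, ⟨3, ?_⟩, Xu_ne_zero (u0_ne h3)⟩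
    · show Xu _ ^ 3 = 0
      rw [pow_succ, pow_two, Xu_cube, u0_iso h3]
      simp
  · intro x x' hx hnx hx0 hx' hnx' hx0'
    set u : Fin (2*ℓ+1) → ℂ := fun i => x (Sum.inr i) (Sum.inl 0) with hu_def
    set u' : Fin (2*ℓ+1) → ℂ := fun i => x' (Sum.inr i) (Sum.inl 0) with hu'_def
    have hxu : x = Xu u := memP_extract hx
    have hxu' : x' = Xu u' := memP_extract hx'
    have hune : u ≠ 0 := by
      intro h
      apply hx0
      rw [hxu, h, Xu_zero]
    have hu'ne : u' ≠ 0 := by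
      intro h
      apply hx0'
      rw [hxu', h, Xu_zero]
    have hiso : u ⬝ᵥ u = 0 := isotropic_of_nilpotent hune (hxu ▸ hnx)
    have hiso' : u' ⬝ᵥ u' = 0 := isotropic_of_nilpotent hu'ne (hxu' ▸ hnx')
    obtain ⟨g, hg1, hg2, hg3⟩ := SO_trans h3 hune hiso hu'ne hiso'
    exact ⟨g, hg1, hg2, by rw [hxu, hxu']; exact conj_eq hg1 hg3⟩
end
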